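/- arXiv:1707.01958 — 4 statements merged into one kernel-verified Lean document; each statement's English description precedes it below -/
import Mathlib

section
/- Let β < 2, t > 0 and v ∈ ℝ. Then 𝐈^ε_t(v) → F(v) = (1/(2−β))|v|^{2−β} sgn v as ε → 0⁺. -/
open Filter Set MeasureTheory intervalIntegral

/-- Rescaled velocity of the deterministic friction system at macroscopic time scale:
for `β ≠ 1`, `𝐕^ε_s(v) = ((|v|^(1-β) - (1-β)s/ε)₊)^(1/(1-β)) sgn v`;
for `β = 1`, `𝐕^ε_s(v) = v e^(-s/ε)`. -/
noncomputable def Vfun (β ε s v : ℝ) : ℝ :=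
  if β = 1 then v * Real.exp (-s / ε)
  else (max (|v| ^ (1 - β) - (1 - β) * s / ε) 0) ^ (1 / (1 - β)) * Real.sign v

/-- Rescaled displacement `𝐈^ε_t(v) = (1/ε) ∫₀^t 𝐕^ε_s(v) ds`. -/
noncomputable def Ifun (β ε t v : ℝ) : ℝ := (1 / ε) * ∫ s in (0:ℝ)..t, Vfun β ε s v

-- (aux lemmas inserted here by cat)

lemma deriv_aux (a c q : ℝ) (hc : c ≠ 0) (hq1 : q + 1 ≠ 0) {x : ℝ} (hx : 0 < a - c * x) :
    HasDerivAt (fun s => -(1/(c*(q+1))) * (max (a - c*s) 0) ^ (q+1)) ((max (a - c*x) 0) ^ q) x := by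
  have hinner : HasDerivAt (fun s : ℝ => a - c * s) (0 - c * 1) x :=
    (hasDerivAt_const x a).sub ((hasDerivAt_id x).const_mul c)
  have hH : HasDerivAt (fun s : ℝ => -(1/(c*(q+1))) * (a - c*s) ^ (q+1))
      (-(1/(c*(q+1))) * ((0 - c * 1) * (q+1) * (a - c*x) ^ (q+1-1))) x :=
    (hinner.rpow_const (Or.inl hx.ne')).const_mul _
  have hev : (fun s => -(1/(c*(q+1))) * (max (a - c*s) 0) ^ (q+1))
      =ᶠ[nhds x] (fun s => -(1/(c*(q+1))) * (a - c*s) ^ (q+1)) := by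
    have hop : IsOpen {s : ℝ | 0 < a - c * s} :=
      isOpen_lt continuous_const (continuous_const.sub (continuous_const.mul continuous_id))
    filter_upwards [hop.mem_nhds hx] with s hs
    rw [max_eq_left hs.le]
  have := hH.congr_of_eventuallyEq hev
  refine this.congr_deriv ?_
  rw [max_eq_left hx.le, add_sub_cancel_right]
  field_simp
  ring

lemma I1 (a c q : ℝ) (ha : 0 < a) (hc : 0 < c) (hq : 0 < q) :
    ∫ s in (0:ℝ)..(a/c), (max (a - c*s) 0) ^ q = a ^ (q+1) / (c * (q+1)) := by
  have hq1 : q + 1 ≠ 0 := by positivity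
  have hL : 0 < a / c := div_pos ha hc
  have hcontmax : Continuous fun s : ℝ => max (a - c*s) 0 :=
    (continuous_const.sub (continuous_const.mul continuous_id)).max continuous_const
  have hG : ContinuousOn (fun s => -(1/(c*(q+1))) * (max (a - c*s) 0) ^ (q+1)) (Icc 0 (a/c)) :=
    (continuous_const.mul (hcontmax.rpow_const (fun x => Or.inr (by positivity)))).continuousOn
  have hint : IntervalIntegrable (fun s => (max (a - c*s) 0) ^ q) volume 0 (a/c) :=
    (hcontmax.rpow_const (fun x => Or.inr hq.le)).intervalIntegrable _ _
  have := integral_eq_sub_of_hasDeriv_right_of_le hL.le hG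
    (fun x hx => (deriv_aux a c q hc.ne' hq1 (by
      have : c * x < c * (a/c) := by exact (mul_lt_mul_iff_right₀ hc).2 hx.2
      rw [mul_div_cancel₀ _ hc.ne'] at this
      linarith)).hasDerivWithinAt) hint
  rw [this, mul_div_cancel₀ _ hc.ne', sub_self, max_self, Real.zero_rpow hq1,
    mul_zero, mul_zero, sub_zero, max_eq_left ha.le, zero_sub]
  ring

lemma I2 (a c q L : ℝ) (ha : 0 < a) (hc : c < 0) (hL : 0 < L) (hq1 : q + 1 ≠ 0) :
    ∫ s in (0:ℝ)..L, (max (a - c*s) 0) ^ q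
      = (a ^ (q+1) - (a - c*L) ^ (q+1)) / (c * (q+1)) := by
  have hpos : ∀ s ∈ Icc (0:ℝ) L, 0 < a - c * s := by
    intro s hs
    nlinarith [hs.1, hs.2]
  have hcontmax : Continuous fun s : ℝ => max (a - c*s) 0 :=
    (continuous_const.sub (continuous_const.mul continuous_id)).max continuous_const
  have hG : ContinuousOn (fun s => -(1/(c*(q+1))) * (max (a - c*s) 0) ^ (q+1)) (Icc 0 L) := by
    apply ContinuousOn.mul continuousOn_const
    apply ContinuousOn.rpow_const hcontmax.continuousOn
    intro x hx
    exact Or.inl (by rw [max_eq_left (hpos x hx).le]; exact (hpos x hx).ne'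
      )
  have hint : IntervalIntegrable (fun s => (max (a - c*s) 0) ^ q) volume 0 L := by
    apply ContinuousOn.intervalIntegrable
    rw [uIcc_of_le hL.le]
    apply ContinuousOn.rpow_const hcontmax.continuousOn
    intro x hx
    exact Or.inl (by rw [max_eq_left (hpos x hx).le]; exact (hpos x hx).ne')
  have := integral_eq_sub_of_hasDeriv_right_of_le hL.le hG
    (fun x hx => (deriv_aux a c q hc.ne hq1 (hpos x (Ioo_subset_Icc_self hx))).hasDerivWithinAt) hint
  rw [this, max_eq_left (hpos L ⟨hL.le, le_refl L⟩).le, mul_zero, sub_zero, max_eq_left ha.le]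
  ring


/-- For `β < 2`, the rescaled displacement converges to the response
`F(v) = (1/(2-β))|v|^(2-β) sgn v` as `ε → 0⁺`. -/
theorem Ifun_tendsto_response (β t v : ℝ) (hβ : β < 2) (ht : 0 < t) :
    Tendsto (fun ε => Ifun β ε t v) (nhdsWithin 0 (Set.Ioi 0))
      (nhds ((1 / (2 - β)) * |v| ^ (2 - β) * Real.sign v)) := by
  rcases eq_or_ne β 1 with hβ1 | hβ1
  · subst hβ1
    have h21 : (2:ℝ) - 1 = 1 := by norm_num
    have hsv : Real.sign v * |v| = v := by
      rcases lt_trichotomy v 0 with h|h|h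
      · rw [Real.sign_of_neg h, abs_of_neg h]; ring
      · simp [h, Real.sign_zero]
      · rw [Real.sign_of_pos h, abs_of_pos h]; ring
    rw [h21, Real.rpow_one, show (1:ℝ)/1 = 1 by norm_num, one_mul, mul_comm, hsv]
    have h1 : Tendsto (fun ε : ℝ => t * ε⁻¹) (nhdsWithin 0 (Set.Ioi 0)) atTop :=
      tendsto_inv_nhdsGT_zero.const_mul_atTop ht
    have h2 : Tendsto (fun ε : ℝ => Real.exp (-(t * ε⁻¹))) (nhdsWithin 0 (Set.Ioi 0)) (nhds 0) :=
      Real.tendsto_exp_atBot.comp (tendsto_neg_atTop_atBot.comp h1)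
    have hlim : Tendsto (fun ε : ℝ => v - v * Real.exp (-(t * ε⁻¹)))
        (nhdsWithin 0 (Set.Ioi 0)) (nhds v) := by
      have := (tendsto_const_nhds (x := v)).sub (h2.const_mul v)
      simpa using this
    refine Tendsto.congr' ?_ hlim
    filter_upwards [self_mem_nhdsWithin] with ε (hε : (0:ℝ) < ε)
    have hVfun : ∀ s : ℝ, Vfun 1 ε s v = v * Real.exp (-s / ε) := by
      intro s; simp [Vfun]
    have hderiv : ∀ x ∈ uIcc (0:ℝ) t,
        HasDerivAt (fun s => v * -ε * Real.exp (-s / ε)) (v * Real.exp (-x / ε)) x := by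
      intro x _
      have hf : HasDerivAt (fun s : ℝ => -s / ε) (-1 / ε) x := (hasDerivAt_id x).neg.div_const ε
      have := hf.exp.const_mul (v * -ε)
      refine this.congr_deriv ?_
      field_simp
    have hint : IntervalIntegrable (fun s => v * Real.exp (-s / ε)) volume 0 t :=
      (continuous_const.mul (Real.continuous_exp.comp
        (continuous_id.neg.div_const ε))).intervalIntegrable _ _
    have key := integral_eq_sub_of_hasDerivAt hderiv hint
    simp only [Ifun, hVfun]
    rw [key, show -t/ε = -(t*ε⁻¹) by ring, neg_zero, zero_div, Real.exp_zero]
    field_simp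
    ring
  · rcases eq_or_ne v 0 with hv | hv
    · subst hv
      have hz : ∀ ε : ℝ, Ifun β ε t 0 = 0 := by
        intro ε; simp [Ifun, Vfun, hβ1]
      simp only [hz, Real.sign_zero, mul_zero]
      exact tendsto_const_nhds
    · have hv' : 0 < |v| := abs_pos.2 hv
      have ha : 0 < |v| ^ (1-β) := Real.rpow_pos_of_pos hv' _
      have h1β : (1:ℝ) - β ≠ 0 := sub_ne_zero.2 (Ne.symm hβ1)
      have h2β : (2:ℝ) - β ≠ 0 := sub_ne_zero.2 (ne_of_gt hβ)
      have hpow : (|v| ^ ((1:ℝ)-β)) ^ (1/(1-β)+1) = |v| ^ ((2:ℝ)-β) := by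
        rw [← Real.rpow_mul (abs_nonneg v)]
        congr 1
        field_simp
        ring
      have hVfun : ∀ ε s : ℝ, Vfun β ε s v
          = (max (|v| ^ (1-β) - (1-β)/ε * s) 0) ^ (1/(1-β)) * Real.sign v := by
        intro ε s; simp only [Vfun]; rw [if_neg hβ1, mul_div_right_comm]
      rcases lt_or_gt_of_ne hβ1 with hlt | hgt
      · -- β < 1
        have hδ : 0 < (1-β)*t/(|v|^(1-β)) := div_pos (mul_pos (by linarith) ht) ha
        refine Tendsto.congr' ?_ tendsto_const_nhds
        filter_upwards [Ioo_mem_nhdsGT_of_mem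
          (⟨le_refl (0:ℝ), hδ⟩ : (0:ℝ) ∈ Ico 0 ((1-β)*t/(|v|^(1-β))))] with ε hε
        obtain ⟨hε0, hεδ⟩ := hε
        have hc : 0 < (1-β)/ε := div_pos (by linarith) hε0
        have hq : 0 < 1/(1-β) := one_div_pos.2 (by linarith)
        set a := |v| ^ ((1:ℝ)-β) with hadef
        set c := (1-β)/ε with hcdef
        have hL : a / c ≤ t := by
          rw [hcdef, div_div_eq_mul_div, div_le_iff₀ (by linarith : (0:ℝ) < 1-β)]
          have := (lt_div_iff₀ ha).1 hεδ
          nlinarith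
        have hcontmax : Continuous fun s : ℝ => max (a - c*s) 0 :=
          (continuous_const.sub (continuous_const.mul continuous_id)).max continuous_const
        have hcont : Continuous fun s : ℝ => (max (a - c*s) 0) ^ (1/(1-β)) :=
          hcontmax.rpow_const (fun x => Or.inr hq.le)
        have int1 : IntervalIntegrable (fun s => (max (a - c*s) 0) ^ (1/(1-β))) volume 0 (a/c) :=
          hcont.intervalIntegrable _ _
        have int2 : IntervalIntegrable (fun s => (max (a - c*s) 0) ^ (1/(1-β))) volume (a/c) t :=
          hcont.intervalIntegrable _ _
        have hzero : ∫ s in (a/c)..t, (max (a - c*s) 0) ^ (1/(1-β)) = 0 := by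
          have heq : EqOn (fun s => (max (a - c*s) 0) ^ (1/(1-β))) (fun _ => (0:ℝ))
              (uIcc (a/c) t) := by
            intro s hs
            rw [uIcc_of_le hL] at hs
            have h1 : a - c*s ≤ 0 := by
              have h2 := (div_le_iff₀ hc).1 hs.1
              nlinarith
            simp only [max_eq_right h1]
            exact Real.zero_rpow hq.ne'
          rw [intervalIntegral.integral_congr heq]
          simp
        symm
        simp only [Ifun, hVfun]
        rw [intervalIntegral.integral_mul_const,
          ← intervalIntegral.integral_add_adjacent_intervals int1 int2, hzero, add_zero,
          I1 a c _ ha hc hq, hpow]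
        have hcq : c * (1/(1-β)+1) = (2-β)/ε := by
          rw [hcdef]; field_simp; ring
        rw [hcq]
        field_simp
      · -- β > 1
        have hq1' : 1/(1-β) + 1 = (2-β)/(1-β) := by field_simp; ring
        have hq1 : 1/(1-β) + 1 ≠ 0 := by
          rw [hq1']; exact div_ne_zero h2β h1β
        have hneg : 1/(1-β) + 1 < 0 := by
          rw [hq1']; exact div_neg_of_pos_of_neg (by linarith) (by linarith)
        have h1 : Tendsto (fun ε : ℝ => (β-1)*t*ε⁻¹) (nhdsWithin 0 (Set.Ioi 0)) atTop :=
          tendsto_inv_nhdsGT_zero.const_mul_atTop (mul_pos (by linarith) ht)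
        have h1' : Tendsto (fun ε : ℝ => |v|^((1:ℝ)-β) + (β-1)*t*ε⁻¹)
            (nhdsWithin 0 (Set.Ioi 0)) atTop := tendsto_atTop_add_const_left _ _ h1
        have h2 : Tendsto (fun x : ℝ => x ^ (1/(1-β)+1)) atTop (nhds 0) := by
          have := tendsto_rpow_neg_atTop (y := -(1/(1-β)+1)) (by linarith)
          simpa using this
        have h3 := h2.comp h1'
        have hlim : Tendsto (fun ε : ℝ =>
            (1/(2-β)) * (|v|^((2:ℝ)-β) - (|v|^((1:ℝ)-β) + (β-1)*t*ε⁻¹) ^ (1/(1-β)+1))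
              * Real.sign v)
            (nhdsWithin 0 (Set.Ioi 0)) (nhds ((1 / (2 - β)) * |v| ^ (2 - β) * Real.sign v)) := by
          have := (((tendsto_const_nhds (x := |v| ^ ((2:ℝ)-β))).sub h3).const_mul (1/(2-β))).mul_const (Real.sign v)
          simpa [Function.comp] using this
        refine Tendsto.congr' ?_ hlim
        filter_upwards [self_mem_nhdsWithin] with ε (hε0 : (0:ℝ) < ε)
        have hc : (1-β)/ε < 0 := div_neg_of_neg_of_pos (by linarith) hε0
        symm
        simp only [Ifun, hVfun]
        rw [intervalIntegral.integral_mul_const,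
          I2 (|v|^((1:ℝ)-β)) ((1-β)/ε) (1/(1-β)) t ha hc ht hq1, hpow,
          show |v|^((1:ℝ)-β) - (1-β)/ε*t = |v|^((1:ℝ)-β) + (β-1)*t*ε⁻¹ by ring,
          show (1-β)/ε*(1/(1-β)+1) = (2-β)/ε by field_simp; ring]
        field_simp
end

section
/- Let β > 2, v ≠ 0 and T > 0. Then sup_{t∈[0,T]} | ε^{(β−2)/(β−1)} 𝐈^ε_t(v) − ((β−1)t)^{(β−2)/(β−1)}/(β−2) · sgn v | → 0 as ε → 0⁺; that is, the rescaled displacement converges uniformly on finite time intervals to the continuous limit ((β−1)t)^{(β−2)/(β−1)}/(β−2) · sgn v. -/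
open Filter Set MeasureTheory

/-- For `β > 2`, `ε^((β-2)/(β-1)) 𝐈^ε_t(v)` converges, uniformly on `[0,T]`,
to `((β-1)t)^((β-2)/(β-1))/(β-2) · sgn v` as `ε → 0⁺`. -/
theorem Ifun_beta_gt_two_uniform (β v T : ℝ) (hβ : 2 < β) (hv : v ≠ 0) (hT : 0 < T) :
    TendstoUniformlyOn
      (fun ε t => ε ^ ((β - 2) / (β - 1)) * Ifun β ε t v)
      (fun t => ((β - 1) * t) ^ ((β - 2) / (β - 1)) / (β - 2) * Real.sign v)
      (nhdsWithin 0 (Set.Ioi 0)) (Set.Icc 0 T) := by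
  have hb1 : (0:ℝ) < β - 1 := by linarith
  have hb2 : (0:ℝ) < β - 2 := by linarith
  have hβ1 : β ≠ 1 := by intro h; rw [h] at hβ; linarith
  have hvpos : 0 < |v| := abs_pos.2 hv
  set A : ℝ := |v| ^ (1 - β) with hA
  have hA0 : 0 < A := Real.rpow_pos_of_pos hvpos _
  set q : ℝ := (β - 2) / (β - 1) with hqdef
  have hq0 : 0 < q := div_pos hb2 hb1
  have hq1 : q ≤ 1 := by rw [div_le_one hb1]; linarith
  have hsgn : |Real.sign v| = 1 := by
    rcases lt_or_gt_of_ne hv with h | h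
    · rw [Real.sign_of_neg h]; norm_num
    · rw [Real.sign_of_pos h]; norm_num
  -- closed formula for the rescaled displacement
  have key : ∀ ε : ℝ, 0 < ε → ∀ t ∈ Set.Icc (0:ℝ) T,
      ε ^ q * Ifun β ε t v
        = Real.sign v * ((ε * A + (β - 1) * t) ^ q - (ε * A) ^ q) / (β - 2) := by
    intro ε hε t ht
    set c : ℝ := (β - 1) / ε with hc
    have hc0 : 0 < c := div_pos hb1 hε
    have hpos : ∀ s ∈ Set.Icc (0:ℝ) t, 0 < A + c * s := fun s hs =>
      add_pos_of_pos_of_nonneg hA0 (mul_nonneg hc0.le hs.1)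
    have hV : Set.EqOn (fun s => Vfun β ε s v)
        (fun s => (A + c * s) ^ (1/(1-β)) * Real.sign v) (Set.uIcc 0 t) := by
      intro s hs
      rw [Set.uIcc_of_le ht.1] at hs
      simp only [Vfun, if_neg hβ1]
      have h1 : |v| ^ (1 - β) - (1 - β) * s / ε = A + c * s := by rw [hc]; ring
      rw [h1, max_eq_left (hpos s hs).le]
    have hint : (∫ s in (0:ℝ)..t, Vfun β ε s v)
        = ∫ s in (0:ℝ)..t, (A + c * s) ^ (1/(1-β)) * Real.sign v :=
      intervalIntegral.integral_congr hV
    have hderiv : ∀ s ∈ Set.uIcc (0:ℝ) t,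
        HasDerivAt (fun s => (A + c * s) ^ q / (c * q)) ((A + c * s) ^ (1/(1-β))) s := by
      intro s hs
      rw [Set.uIcc_of_le ht.1] at hs
      have h1 : HasDerivAt (fun s : ℝ => A + c * s) c s := by
        simpa using ((hasDerivAt_id s).const_mul c).const_add A
      have h2 : HasDerivAt (fun y : ℝ => y ^ q) (q * (A + c * s) ^ (q - 1)) (A + c * s) :=
        Real.hasDerivAt_rpow_const (Or.inl (hpos s hs).ne')
      have h3 := (h2.comp s h1).div_const (c * q)
      refine h3.congr_deriv ?_
      have hq1' : q - 1 = 1/(1-β) := by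
        have hne : (1:ℝ) - β ≠ 0 := by linarith
        rw [hqdef]
        field_simp
        ring
      rw [← hq1']
      field_simp
    have hcont : ContinuousOn (fun s => (A + c * s) ^ (1/(1-β))) (Set.uIcc 0 t) := by
      apply ContinuousOn.rpow_const
      · exact (continuous_const.add (continuous_const.mul continuous_id)).continuousOn
      · intro s hs
        rw [Set.uIcc_of_le ht.1] at hs
        exact Or.inl (hpos s hs).ne'
    have hint2 : (∫ s in (0:ℝ)..t, (A + c * s) ^ (1/(1-β)))
        = (A + c * t) ^ q / (c * q) - (A + c * 0) ^ q / (c * q) :=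
      intervalIntegral.integral_eq_sub_of_hasDerivAt hderiv hcont.intervalIntegrable
    have e1 : ε ^ q * (A + c * t) ^ q = (ε * A + (β - 1) * t) ^ q := by
      rw [← Real.mul_rpow hε.le (hpos t ⟨ht.1, le_refl t⟩).le]
      congr 1
      rw [hc]
      field_simp
    have e2 : ε ^ q * A ^ q = (ε * A) ^ q := (Real.mul_rpow hε.le hA0.le).symm
    have hcq : ε * (c * q) = β - 2 := by
      rw [hc, hqdef]
      field_simp
    rw [Ifun, hint, intervalIntegral.integral_mul_const, hint2, mul_zero, add_zero]
    rw [show (1/ε) * (((A + c * t) ^ q / (c * q) - A ^ q / (c * q)) * Real.sign v)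
        = Real.sign v * ((A + c * t) ^ q - A ^ q) / (ε * (c * q)) from by
      field_simp]
    rw [hcq]
    rw [show ε ^ q * (Real.sign v * ((A + c * t) ^ q - A ^ q) / (β - 2))
        = Real.sign v * (ε ^ q * (A + c * t) ^ q - ε ^ q * A ^ q) / (β - 2) from by ring]
    rw [e1, e2]
  -- subadditivity of rpow
  have hsub : ∀ x y : ℝ, 0 ≤ x → 0 ≤ y → (x + y) ^ q ≤ x ^ q + y ^ q := by
    intro x y hx hy
    have h := NNReal.rpow_add_le_add_rpow x.toNNReal y.toNNReal hq0.le hq1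
    have h' := NNReal.coe_le_coe.2 h
    rwa [NNReal.coe_add, NNReal.coe_rpow, NNReal.coe_rpow, NNReal.coe_rpow, NNReal.coe_add,
      Real.coe_toNNReal _ hx, Real.coe_toNNReal _ hy] at h'
  rw [Metric.tendstoUniformlyOn_iff]
  intro δ hδ
  have htend : Tendsto (fun ε : ℝ => (ε * A) ^ q / (β - 2))
      (nhdsWithin 0 (Set.Ioi 0)) (nhds 0) := by
    have h1 : Tendsto (fun ε : ℝ => ε * A) (nhdsWithin 0 (Set.Ioi 0)) (nhds 0) := by
      have h := (continuous_id.mul (continuous_const : Continuous fun _ : ℝ => A)).tendsto 0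
      have h' : Tendsto (fun ε : ℝ => ε * A) (nhdsWithin 0 (Set.Ioi 0)) (nhds (0 * A)) :=
        h.mono_left nhdsWithin_le_nhds
      rwa [zero_mul] at h'
    have h2 : ContinuousAt (fun x : ℝ => x ^ q) 0 :=
      Real.continuousAt_rpow_const 0 q (Or.inr hq0.le)
    have h3 := (h2.tendsto.comp h1).div_const (β - 2)
    simpa [Real.zero_rpow hq0.ne'] using h3
  filter_upwards [self_mem_nhdsWithin, htend.eventually (gt_mem_nhds hδ)] with ε hεmem hlt
  have hε : (0:ℝ) < ε := hεmem
  intro t ht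
  rw [Real.dist_eq, key ε hε t ht]
  set x : ℝ := (β - 1) * t with hx
  have hx0 : 0 ≤ x := mul_nonneg hb1.le ht.1
  have hh0 : 0 < ε * A := mul_pos hε hA0
  have sub1 : x ^ q ≤ (ε * A + x) ^ q :=
    Real.rpow_le_rpow hx0 (le_add_of_nonneg_left hh0.le) hq0.le
  have sub2 : (ε * A + x) ^ q ≤ (ε * A) ^ q + x ^ q := hsub _ _ hh0.le hx0
  have heq : x ^ q / (β - 2) * Real.sign v
        - Real.sign v * ((ε * A + x) ^ q - (ε * A) ^ q) / (β - 2)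
      = Real.sign v * (x ^ q - ((ε * A + x) ^ q - (ε * A) ^ q)) / (β - 2) := by ring
  rw [heq, abs_div, abs_mul, hsgn, one_mul, abs_of_pos hb2]
  have hinner : |x ^ q - ((ε * A + x) ^ q - (ε * A) ^ q)| ≤ (ε * A) ^ q := by
    rw [abs_le]
    constructor <;> nlinarith [sub1, sub2]
  calc |x ^ q - ((ε * A + x) ^ q - (ε * A) ^ q)| / (β - 2)
      ≤ (ε * A) ^ q / (β - 2) := by gcongr
    _ < δ := hlt
end

section
/- Let β < 2, x₀ ∈ ℝ, let 0 = τ₀ < τ₁ < τ₂ < ⋯ be a strictly increasing sequence with τ_k → ∞, and let (J_k)_{k≥0} be real numbers (J₀ being the initial velocity). Define recursively W₀^ε = J₀ and W_{k+1}^ε = 𝐕^ε_{τ_{k+1}−τ_k}(W_k^ε) + J_{k+1}. For t ≥ 0 let N_t = max{k : τ_k ≤ t} and X^ε_t = x₀ + Σ_{k=0}^{N_t−1} 𝐈^ε_{τ_{k+1}−τ_k}(W_k^ε) + 𝐈^ε_{t−τ_{N_t}}(W_{N_t}^ε). Then for every t > 0 with t ∉ {τ_k : k ≥ 0}, X^ε_t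 → x₀ + (1/(2−β)) Σ_{k=0}^{N_t} |J_k|^{2−β} sgn J_k as ε → 0⁺. -/
open Filter Set MeasureTheory

lemma pp_cont {p : ℝ} (hp : 0 < p) : Continuous fun x : ℝ => max x 0 ^ p := by
  rw [continuous_iff_continuousAt]
  intro x
  exact ContinuousAt.rpow_const ((continuous_id.max continuous_const).continuousAt)
    (Or.inr hp.le)

lemma pp_deriv_pos {q x : ℝ} (hx : 0 < x) :
    HasDerivAt (fun x : ℝ => max x 0 ^ q) (q * x ^ (q - 1)) x := by
  have h := Real.hasDerivAt_rpow_const (x := x) (p := q) (Or.inl hx.ne')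
  refine h.congr_of_eventuallyEq ?_
  filter_upwards [eventually_gt_nhds hx] with y hy
  rw [max_eq_left hy.le]

lemma pp_deriv {q : ℝ} (hq : 1 < q) (x : ℝ) :
    HasDerivAt (fun x : ℝ => max x 0 ^ q) (q * max x 0 ^ (q - 1)) x := by
  rcases lt_trichotomy x 0 with hx | rfl | hx
  · have : (fun x : ℝ => max x 0 ^ q) =ᶠ[nhds x] fun _ => (0:ℝ) ^ q := by
      filter_upwards [eventually_lt_nhds hx] with y hy
      rw [max_eq_right hy.le]
    rw [max_eq_right hx.le, Real.zero_rpow (by linarith), mul_zero]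
    exact (hasDerivAt_const x ((0:ℝ) ^ q)).congr_of_eventuallyEq this
  · rw [max_self, Real.zero_rpow (by linarith), mul_zero]
    rw [hasDerivAt_iff_tendsto_slope]
    apply squeeze_zero_norm' (a := fun y : ℝ => |y| ^ (q - 1))
    · filter_upwards [self_mem_nhdsWithin] with y (hy : y ≠ 0)
      rw [slope_def_field]
      rcases lt_or_gt_of_ne hy with h | h
      · rw [max_eq_right h.le]
        simp [Real.zero_rpow (show q ≠ 0 by linarith), Real.rpow_nonneg (abs_nonneg y)]
      · rw [max_eq_left h.le, max_self, Real.zero_rpow (show q ≠ 0 by linarith), sub_zero,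
          sub_zero, Real.norm_eq_abs, abs_div, abs_of_pos h,
          abs_of_nonneg (Real.rpow_nonneg h.le q), Real.rpow_sub h, Real.rpow_one]
    · have : ContinuousAt (fun y : ℝ => |y| ^ (q - 1)) 0 := by
        exact (Real.continuousAt_rpow_const _ _ (Or.inr (by linarith))).comp
          continuous_abs.continuousAt
      have h0 := this.tendsto
      simp only [abs_zero, Real.zero_rpow (by linarith : q - 1 ≠ 0)] at h0
      exact h0.mono_left nhdsWithin_le_nhds
  · have := pp_deriv_pos (q := q) hx
    rw [max_eq_left hx.le]
    exact this


noncomputable def fR (β x : ℝ) : ℝ := max x 0 ^ (2 - β) - max (-x) 0 ^ (2 - β)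

lemma fR_cont {β : ℝ} (hβ : β < 2) : Continuous (fR β) :=
  (pp_cont (by linarith)).sub ((pp_cont (by linarith)).comp continuous_neg)

lemma fR_zero {β : ℝ} : fR β 0 = 0 := by simp [fR]

lemma fR_neg {β : ℝ} (x : ℝ) : fR β (-x) = -fR β x := by
  simp only [fR, neg_neg]; ring

lemma fR_of_nonneg {β x : ℝ} (hβ : β < 2) (hx : 0 ≤ x) : fR β x = x ^ (2 - β) := by
  rcases eq_or_lt_of_le hx with rfl | hx
  · rw [fR_zero, Real.zero_rpow (by linarith)]
  · rw [fR, max_eq_left hx.le, max_eq_right (by linarith), Real.zero_rpow (by linarith), sub_zero]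

lemma fR_eq {β : ℝ} (hβ : β < 2) (x : ℝ) : fR β x = |x| ^ (2 - β) * Real.sign x := by
  rcases lt_trichotomy x 0 with hx | rfl | hx
  · rw [← neg_neg x, fR_neg, fR_of_nonneg hβ (by linarith), Real.sign_neg, abs_neg,
      Real.sign_of_pos (by linarith), abs_of_pos (by linarith : (0:ℝ) < -x)]
    ring
  · simp [fR_zero]
  · rw [fR_of_nonneg hβ hx.le, Real.sign_of_pos hx, abs_of_pos hx, mul_one]

lemma Vfun_zero {β ε s : ℝ} : Vfun β ε s 0 = 0 := by
  simp [Vfun, Real.sign_zero]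

lemma Vfun_neg {β ε s v : ℝ} : Vfun β ε s (-v) = -Vfun β ε s v := by
  simp only [Vfun, abs_neg, Real.sign_neg]
  split <;> ring

lemma Vfun_nonneg {β ε s v : ℝ} (hβ : β ≠ 1) (hv : 0 < v) : 0 ≤ Vfun β ε s v := by
  rw [Vfun, if_neg hβ, Real.sign_of_pos hv, mul_one]
  exact Real.rpow_nonneg (le_max_right _ _) _

lemma integral_Vfun_pos {β ε t v : ℝ} (hβ : β < 2) (hε : 0 < ε) (ht : 0 ≤ t) (hv : 0 < v) :
    ∫ s in (0:ℝ)..t, Vfun β ε s v = (ε / (2 - β)) * (fR β v - fR β (Vfun β ε t v)) := by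
  have h2β : (0:ℝ) < 2 - β := by linarith
  rcases eq_or_ne β 1 with rfl | hβ1
  · -- exponential case
    have hVf : ∀ s : ℝ, Vfun 1 ε s v = v * Real.exp (-s / ε) := fun s => if_pos rfl
    simp only [hVf]
    have hderiv : ∀ s ∈ Set.uIcc (0:ℝ) t,
        HasDerivAt (fun s : ℝ => -(ε * v) * Real.exp (-s / ε)) (v * Real.exp (-s / ε)) s := by
      intro s _
      have h1 : HasDerivAt (fun s : ℝ => -s / ε) (-1 / ε) s := by
        simpa using ((hasDerivAt_id s).neg.div_const ε)
      have h2 := (h1.exp).const_mul (-(ε * v))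
      convert h2 using 1
      · rfl
      · rfl
      field_simp
    have hint : IntervalIntegrable (fun s : ℝ => v * Real.exp (-s / ε)) MeasureTheory.volume 0 t :=
      (Continuous.intervalIntegrable (by continuity) _ _)
    rw [intervalIntegral.integral_eq_sub_of_hasDerivAt hderiv hint,
      fR_of_nonneg hβ hv.le,
      fR_of_nonneg hβ (by positivity : (0:ℝ) ≤ v * Real.exp (-t / ε)),
      show (2:ℝ) - 1 = 1 by norm_num, Real.rpow_one, Real.rpow_one,
      neg_zero, zero_div, Real.exp_zero]
    ring
  · -- power case
    have h1β : (1:ℝ) - β ≠ 0 := by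
      intro h; exact hβ1 (by linarith)
    set p : ℝ := 1 / (1 - β) with hp
    set q : ℝ := (2 - β) / (1 - β) with hq
    set A : ℝ := v ^ (1 - β) with hA
    have hA0 : 0 < A := Real.rpow_pos_of_pos hv _
    have habs : |v| = v := abs_of_pos hv
    have hVf : ∀ s : ℝ, Vfun β ε s v = max (A - (1 - β) * s / ε) 0 ^ p := by
      intro s
      rw [Vfun, if_neg hβ1, Real.sign_of_pos hv, mul_one, habs]
    have hinner : ∀ s : ℝ, HasDerivAt (fun s : ℝ => A - (1 - β) * s / ε)
        (-((1 - β) / ε)) s := by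
      intro s
      have heq : (fun s : ℝ => A - (1 - β) * s / ε) = fun s : ℝ => A - ((1 - β) / ε) * s := by
        funext s; ring
      rw [heq]
      have h := ((hasDerivAt_id s).const_mul ((1 - β) / ε)).const_sub A
      simpa using h
    have hposs : ∀ s : ℝ, 0 ≤ s → 1 < β → 0 < A - (1 - β) * s / ε := by
      intro s hs hb
      have : (1 - β) * s / ε ≤ 0 := by
        apply div_nonpos_of_nonpos_of_nonneg _ hε.le
        exact mul_nonpos_of_nonpos_of_nonneg (by linarith) hs
      linarith
    have hqp : q - 1 = p := by
      rw [hq, hp]; field_simp; norm_num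
    have hderiv : ∀ s ∈ Set.uIcc (0:ℝ) t,
        HasDerivAt (fun s : ℝ => -(ε / (2 - β)) * max (A - (1 - β) * s / ε) 0 ^ q)
          (Vfun β ε s v) s := by
      intro s hs
      rw [Set.uIcc_of_le ht] at hs
      have houter : HasDerivAt (fun x : ℝ => max x 0 ^ q)
          (q * max (A - (1 - β) * s / ε) 0 ^ (q - 1)) (A - (1 - β) * s / ε) := by
        rcases lt_or_gt_of_ne hβ1 with hb | hb
        · apply pp_deriv
          rw [hq, lt_div_iff₀ (by linarith : (0:ℝ) < 1 - β)]
          linarith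
        · have hpos : 0 < A - (1 - β) * s / ε := hposs s hs.1 hb
          rw [max_eq_left hpos.le]
          exact pp_deriv_pos hpos
      have hcomp := (houter.comp s (hinner s)).const_mul (-(ε / (2 - β)))
      convert hcomp using 1
      · rfl
      · rfl
      · rfl
      rw [hVf s, hqp]
      have hc : -(ε / (2 - β)) * (q * max (A - (1 - β) * s / ε) 0 ^ p * -((1 - β) / ε))
          = (ε / (2 - β) * (q * ((1 - β) / ε))) * max (A - (1 - β) * s / ε) 0 ^ p := by
        ring
      rw [hc, hq]
      have hone : ε / (2 - β) * ((2 - β) / (1 - β) * ((1 - β) / ε)) = 1 := by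
        field_simp
      rw [hone, one_mul]
    have hbase : Continuous (fun s : ℝ => A - (1 - β) * s / ε) := by
      have heq : (fun s : ℝ => A - (1 - β) * s / ε) = fun s : ℝ => A - ((1 - β) / ε) * s := by
        funext s; ring
      rw [heq]
      exact continuous_const.sub (continuous_const.mul continuous_id)
    have hint : IntervalIntegrable (fun s : ℝ => Vfun β ε s v) MeasureTheory.volume 0 t := by
      rw [show (fun s : ℝ => Vfun β ε s v)
          = fun s : ℝ => max (A - (1 - β) * s / ε) 0 ^ p from funext hVf]
      rcases lt_or_gt_of_ne hβ1 with hb | hb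
      · exact ((pp_cont (one_div_pos.mpr (by linarith : (0:ℝ) < 1 - β))).comp
          hbase).intervalIntegrable 0 t
      · apply ContinuousOn.intervalIntegrable
        intro s hs
        rw [Set.uIcc_of_le ht] at hs
        have hpos : 0 < A - (1 - β) * s / ε := hposs s hs.1 hb
        exact (ContinuousAt.rpow_const ((hbase.max continuous_const).continuousAt)
          (Or.inl (by rw [max_eq_left hpos.le]; exact hpos.ne'))).continuousWithinAt
    rw [intervalIntegral.integral_eq_sub_of_hasDerivAt hderiv hint]
    have hV0 : 0 ≤ Vfun β ε t v := Vfun_nonneg hβ1 hv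
    rw [fR_of_nonneg hβ hv.le, fR_of_nonneg hβ hV0, hVf t]
    have e1 : (max (A - (1 - β) * t / ε) 0 ^ p) ^ (2 - β)
        = max (A - (1 - β) * t / ε) 0 ^ q := by
      rw [← Real.rpow_mul (le_max_right _ _)]
      congr 1
      rw [hp, hq]; field_simp
    have e2 : max (A - (1 - β) * 0 / ε) 0 ^ q = v ^ (2 - β) := by
      rw [mul_zero, zero_div, sub_zero, max_eq_left hA0.le, hA,
        ← Real.rpow_mul hv.le]
      congr 1
      rw [hq]
      field_simp
    rw [e1, e2]
    ring

lemma integral_Vfun {β ε t : ℝ} (hβ : β < 2) (hε : 0 < ε) (ht : 0 ≤ t) (v : ℝ) :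
    ∫ s in (0:ℝ)..t, Vfun β ε s v = (ε / (2 - β)) * (fR β v - fR β (Vfun β ε t v)) := by
  rcases lt_trichotomy v 0 with hv | rfl | hv
  · have key := integral_Vfun_pos hβ hε ht (neg_pos.mpr hv)
    have h : (fun s => Vfun β ε s v) = fun s => -Vfun β ε s (-v) := by
      funext s; rw [Vfun_neg, neg_neg]
    rw [h, intervalIntegral.integral_neg, key, fR_neg]
    rw [show Vfun β ε t v = -Vfun β ε t (-v) by rw [Vfun_neg, neg_neg], fR_neg]
    ring
  · simp only [Vfun_zero]
    rw [intervalIntegral.integral_zero, fR_zero, sub_self, mul_zero]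
  · exact integral_Vfun_pos hβ hε ht hv
lemma abs_sign_le (x : ℝ) : |Real.sign x| ≤ 1 := by
  rcases Real.sign_apply_eq x with h | h | h <;> rw [h] <;> norm_num

lemma Vfun_tendsto {β s : ℝ} (hβ : β < 2) (hs : 0 < s) {u : ℝ → ℝ} {c : ℝ}
    (hu : Tendsto u (nhdsWithin 0 (Set.Ioi 0)) (nhds c)) :
    Tendsto (fun ε => Vfun β ε s (u ε)) (nhdsWithin 0 (Set.Ioi 0)) (nhds 0) := by
  have hinv : Tendsto (fun ε : ℝ => 1 / ε) (nhdsWithin 0 (Set.Ioi 0)) atTop := by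
    simpa [one_div] using tendsto_inv_nhdsGT_zero
  rcases eq_or_ne β 1 with rfl | hβ1
  · have hVf : ∀ ε x : ℝ, Vfun 1 ε s x = x * Real.exp (-s / ε) := fun ε x => if_pos rfl
    simp only [hVf]
    have hexp : Tendsto (fun ε : ℝ => Real.exp (-s / ε)) (nhdsWithin 0 (Set.Ioi 0)) (nhds 0) := by
      apply Real.tendsto_exp_atBot.comp
      have h1 : Tendsto (fun ε : ℝ => s * (1 / ε)) (nhdsWithin 0 (Set.Ioi 0)) atTop :=
        Tendsto.const_mul_atTop hs hinv
      have h2 := tendsto_neg_atTop_atBot.comp h1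
      exact h2.congr fun ε => by simp only [Function.comp_apply]; ring
    simpa using hu.mul hexp
  · rcases lt_or_gt_of_ne hβ1 with hb | hb
    · -- β < 1 : eventually zero
      have hbd : ∀ᶠ ε in nhdsWithin 0 (Set.Ioi 0), |u ε| ≤ |c| + 1 :=
        hu.abs.eventually (eventually_le_nhds (by linarith))
      have h1 : Tendsto (fun ε : ℝ => (1 - β) * s * (1 / ε)) (nhdsWithin 0 (Set.Ioi 0)) atTop :=
        Tendsto.const_mul_atTop (by nlinarith) hinv
      have hdiv : ∀ᶠ ε in nhdsWithin 0 (Set.Ioi 0),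
          (|c| + 1) ^ (1 - β) < (1 - β) * s * (1 / ε) :=
        h1.eventually_gt_atTop _
      have hev : ∀ᶠ ε in nhdsWithin 0 (Set.Ioi 0), Vfun β ε s (u ε) = 0 := by
        filter_upwards [hbd, hdiv] with ε h1 h2
        rw [Vfun, if_neg hβ1]
        have hle : |u ε| ^ (1 - β) ≤ (|c| + 1) ^ (1 - β) :=
          Real.rpow_le_rpow (abs_nonneg _) h1 (by linarith)
        have hneg : |u ε| ^ (1 - β) - (1 - β) * s / ε < 0 := by
          have : (1 - β) * s / ε = (1 - β) * s * (1 / ε) := by ring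
          rw [this]; linarith
        rw [max_eq_right hneg.le, Real.zero_rpow (one_div_ne_zero (by linarith)), zero_mul]
      exact Tendsto.congr' (hev.mono fun ε h => h.symm) tendsto_const_nhds
    · -- 1 < β < 2 : squeeze
      have hexp_eq : (1:ℝ) / (1 - β) = -(1 / (β - 1)) := by
        rw [one_div, one_div, ← inv_neg, neg_sub]
      have hg : Tendsto (fun ε : ℝ => ((β - 1) * s * (1 / ε)) ^ ((1:ℝ) / (1 - β)))
          (nhdsWithin 0 (Set.Ioi 0)) (nhds 0) := by
        rw [hexp_eq]
        exact (tendsto_rpow_neg_atTop (div_pos one_pos (by linarith))).comp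
          (Tendsto.const_mul_atTop (by nlinarith) hinv)
      apply squeeze_zero_norm' (a := fun ε : ℝ => ((β - 1) * s * (1 / ε)) ^ ((1:ℝ) / (1 - β)))
      · filter_upwards [self_mem_nhdsWithin] with ε (hε : ε ∈ Set.Ioi 0)
        rw [Set.mem_Ioi] at hε
        rw [Vfun, if_neg hβ1]
        have hB : 0 < (β - 1) * s * (1 / ε) :=
          mul_pos (mul_pos (by linarith) hs) (one_div_pos.mpr hε)
        have hmax : (β - 1) * s * (1 / ε) ≤ max (|u ε| ^ (1 - β) - (1 - β) * s / ε) 0 := by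
          refine le_max_of_le_left ?_
          have h1 : 0 ≤ |u ε| ^ (1 - β) := Real.rpow_nonneg (abs_nonneg _) _
          have h2 : -((1 - β) * s / ε) = (β - 1) * s * (1 / ε) := by ring
          linarith [h2 ▸ le_refl ((β - 1) * s * (1 / ε))]
        have hmono : max (|u ε| ^ (1 - β) - (1 - β) * s / ε) 0 ^ ((1:ℝ) / (1 - β))
            ≤ ((β - 1) * s * (1 / ε)) ^ ((1:ℝ) / (1 - β)) :=
          Real.rpow_le_rpow_of_nonpos hB hmax (by
            rw [hexp_eq]
            have : (0:ℝ) < 1 / (β - 1) := div_pos one_pos (by linarith)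
            linarith)
        calc ‖max (|u ε| ^ (1 - β) - (1 - β) * s / ε) 0 ^ ((1:ℝ) / (1 - β)) * Real.sign (u ε)‖
            = max (|u ε| ^ (1 - β) - (1 - β) * s / ε) 0 ^ ((1:ℝ) / (1 - β)) * |Real.sign (u ε)| := by
              rw [norm_mul, Real.norm_eq_abs, Real.norm_eq_abs,
                abs_of_nonneg (Real.rpow_nonneg (le_max_right _ _) _)]
          _ ≤ max (|u ε| ^ (1 - β) - (1 - β) * s / ε) 0 ^ ((1:ℝ) / (1 - β)) * 1 :=
              mul_le_mul_of_nonneg_left (abs_sign_le _)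
                (Real.rpow_nonneg (le_max_right _ _) _)
          _ ≤ ((β - 1) * s * (1 / ε)) ^ ((1:ℝ) / (1 - β)) := by rw [mul_one]; exact hmono
      · exact hg

lemma Ifun_tendsto {β t : ℝ} (hβ : β < 2) (ht : 0 < t) {u : ℝ → ℝ} {c : ℝ}
    (hu : Tendsto u (nhdsWithin 0 (Set.Ioi 0)) (nhds c)) :
    Tendsto (fun ε => Ifun β ε t (u ε)) (nhdsWithin 0 (Set.Ioi 0))
      (nhds ((1 / (2 - β)) * fR β c)) := by
  have h2β : (0:ℝ) < 2 - β := by linarith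
  have heq : ∀ᶠ ε in nhdsWithin 0 (Set.Ioi 0), Ifun β ε t (u ε)
      = (1 / (2 - β)) * (fR β (u ε) - fR β (Vfun β ε t (u ε))) := by
    filter_upwards [self_mem_nhdsWithin] with ε (hε : ε ∈ Set.Ioi 0)
    rw [Set.mem_Ioi] at hε
    rw [Ifun, integral_Vfun hβ hε ht.le]
    field_simp
  have h1 : Tendsto (fun ε => fR β (u ε)) (nhdsWithin 0 (Set.Ioi 0)) (nhds (fR β c)) :=
    ((fR_cont hβ).tendsto c).comp hu
  have h2 : Tendsto (fun ε => fR β (Vfun β ε t (u ε))) (nhdsWithin 0 (Set.Ioi 0))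
      (nhds (fR β 0)) :=
    ((fR_cont hβ).tendsto 0).comp (Vfun_tendsto hβ ht hu)
  have h3 := ((h1.sub h2).const_mul (1 / (2 - β)))
  rw [fR_zero, sub_zero] at h3
  exact Tendsto.congr' (heq.mono fun ε h => h.symm) h3

/-- Compound-Poisson case for `β < 2`: the position process driven by jumps `J_k`
at times `τ_k` converges pathwise, at every continuity time `t`, to
`x₀ + (1/(2-β)) ∑_{k=0}^{N_t} |J_k|^(2-β) sgn J_k` as `ε → 0⁺`. -/
theorem compound_poisson_position_limit
    (β x₀ : ℝ) (hβ : β < 2)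
    (τ : ℕ → ℝ) (hτ0 : τ 0 = 0) (hτmono : StrictMono τ)
    (hτtop : Tendsto τ atTop atTop)
    (J : ℕ → ℝ)
    (W : ℝ → ℕ → ℝ)
    (hW0 : ∀ ε : ℝ, W ε 0 = J 0)
    (hWs : ∀ ε : ℝ, ∀ k : ℕ,
      W ε (k + 1) = Vfun β ε (τ (k + 1) - τ k) (W ε k) + J (k + 1))
    (N : ℝ → ℕ)
    (hN : ∀ t : ℝ, 0 ≤ t → τ (N t) ≤ t ∧ ∀ k : ℕ, τ k ≤ t → k ≤ N t)
    (X : ℝ → ℝ → ℝ)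
    (hX : ∀ ε t : ℝ, X ε t =
      x₀ + (∑ k ∈ Finset.range (N t), Ifun β ε (τ (k + 1) - τ k) (W ε k))
        + Ifun β ε (t - τ (N t)) (W ε (N t))) :
    ∀ t : ℝ, 0 < t → (∀ k : ℕ, t ≠ τ k) →
      Tendsto (fun ε => X ε t) (nhdsWithin 0 (Set.Ioi 0))
        (nhds (x₀ + (1 / (2 - β)) *
          ∑ k ∈ Finset.range (N t + 1), |J k| ^ (2 - β) * Real.sign (J k))) := by
  intro t ht htne
  obtain ⟨hτle, -⟩ := hN t ht.le
  have hWlim : ∀ k : ℕ, Tendsto (fun ε => W ε k) (nhdsWithin 0 (Set.Ioi 0)) (nhds (J k)) := by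
    intro k
    induction k with
    | zero =>
      simp only [hW0]
      exact tendsto_const_nhds
    | succ k ih =>
      simp only [hWs]
      have hτd : 0 < τ (k + 1) - τ k := sub_pos.mpr (hτmono (Nat.lt_succ_self k))
      have h := (Vfun_tendsto hβ hτd ih).add (tendsto_const_nhds (x := J (k + 1)))
      simpa using h
  have hlast : 0 < t - τ (N t) := sub_pos.mpr (lt_of_le_of_ne hτle (htne (N t)).symm)
  have hsum := tendsto_finset_sum (Finset.range (N t))
    (fun k _ => Ifun_tendsto hβ (sub_pos.mpr (hτmono (Nat.lt_succ_self k))) (hWlim k))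
  have hlastlim := Ifun_tendsto hβ hlast (hWlim (N t))
  have htot := ((tendsto_const_nhds (x := x₀)).add hsum).add hlastlim
  have hfun : (fun ε => X ε t) = fun ε =>
      x₀ + (∑ k ∈ Finset.range (N t), Ifun β ε (τ (k + 1) - τ k) (W ε k))
        + Ifun β ε (t - τ (N t)) (W ε (N t)) := funext fun ε => hX ε t
  have hval : x₀ + (1 / (2 - β)) *
        ∑ k ∈ Finset.range (N t + 1), |J k| ^ (2 - β) * Real.sign (J k)
      = x₀ + (∑ k ∈ Finset.range (N t), (1 / (2 - β)) * fR β (J k))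
        + (1 / (2 - β)) * fR β (J (N t)) := by
    simp only [fR_eq hβ]
    rw [Finset.sum_range_succ, mul_add, Finset.mul_sum]
    ring
  rw [hfun, hval]
  exact htot
end

section
/- Let α ∈ (0,2), σ ∈ (0,α), C₁, C₂, C₃ > 0, and let G : ℝ → ℝ be twice continuously differentiable with |G′(y)| ≤ C₃|y|^{σ−1} and |G″(y)| ≤ C₃|y|^{σ−2} for all |y| ≥ 1. Then there exists a constant C > 0, depending only on α, σ, C₁, C₂, C₃ and on the suprema of |G′| and |G″| on [−5,5], such that for every Borel measure ν on ℝ concentrated on (0,∞) satisfying ν([r,∞)) ≤ C₁ r^{−α} for all r > 0 and ∫ (u² ∧ 1) dν(u) ≤ C₂, and every y ∈ ℝ, the function u ↦ G(y+u) + G(y−u) − 2G(y) is ν-integrable and |∫₀^∞ (G(y+u)+G(y−u)−2G(y)) dν(u)| ≤ C(1+|y|)^{σ−α}. -/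
open Filter Set MeasureTheory


lemma two_pow_rpow (k : ℕ) (e : ℝ) : ((2:ℝ)^k : ℝ) ^ e = ((2:ℝ) ^ e) ^ k := by
  rw [← Real.rpow_natCast (2:ℝ) k, ← Real.rpow_natCast ((2:ℝ)^e) k,
    ← Real.rpow_mul (by norm_num), ← Real.rpow_mul (by norm_num), mul_comm]

lemma dyadic_cover {r u : ℝ} (hr : 0 < r) (hu : r ≤ u) :
    ∃ k : ℕ, r * 2^k ≤ u ∧ u < r * 2^(k+1) := by
  have hex : ∃ n : ℕ, u < r * 2^n := by
    obtain ⟨n, hn⟩ := pow_unbounded_of_one_lt (u/r) (by norm_num : (1:ℝ) < 2)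
    exact ⟨n, by rw [div_lt_iff₀ hr] at hn; linarith⟩
  classical
  set n := Nat.find hex with hn
  have hspec : u < r * 2^n := Nat.find_spec hex
  have hn0 : n ≠ 0 := by
    rintro h
    rw [h] at hspec
    simp at hspec
    linarith
  refine ⟨n - 1, ?_, ?_⟩
  · have := Nat.find_min hex (m := n - 1) (by omega)
    push_neg at this
    exact this
  · have : n - 1 + 1 = n := by omega
    rw [this]; exact hspec

lemma tail_lintegral_bound (α σ C₁ : ℝ) (hα0 : 0 < α) (hσ0 : 0 < σ) (hσα : σ < α)
    (hC₁ : 0 < C₁) (ν : Measure ℝ)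
    (htail : ∀ r : ℝ, 0 < r → ν (Set.Ici r) ≤ ENNReal.ofReal (C₁ * r ^ (-α)))
    (r : ℝ) (hr : 0 < r) :
    ∫⁻ u in Set.Ici r, ENNReal.ofReal (u ^ σ) ∂ν
      ≤ ENNReal.ofReal ((C₁ * 2^σ / (1 - 2^(σ-α))) * r ^ (σ - α)) := by
  have hp0 : (0:ℝ) < 2^(σ-α) := Real.rpow_pos_of_pos (by norm_num) _
  have hp1 : (2:ℝ)^(σ-α) < 1 :=
    Real.rpow_lt_one_of_one_lt_of_neg (by norm_num) (by linarith)
  have hcover : Set.Ici r ⊆ ⋃ k : ℕ, Set.Ico (r * 2^k) (r * 2^(k+1)) := by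
    intro u hu
    obtain ⟨k, h1, h2⟩ := dyadic_cover hr hu
    exact Set.mem_iUnion.2 ⟨k, h1, h2⟩
  calc ∫⁻ u in Set.Ici r, ENNReal.ofReal (u ^ σ) ∂ν
      ≤ ∫⁻ u in ⋃ k : ℕ, Set.Ico (r * 2^k) (r * 2^(k+1)), ENNReal.ofReal (u ^ σ) ∂ν :=
        lintegral_mono_set hcover
    _ ≤ ∑' k : ℕ, ∫⁻ u in Set.Ico (r * 2^k) (r * 2^(k+1)), ENNReal.ofReal (u ^ σ) ∂ν :=
        lintegral_iUnion_le _ _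
    _ ≤ ∑' k : ℕ, ENNReal.ofReal ((C₁ * 2^σ * r^(σ-α)) * (2^(σ-α))^k) := by
        refine ENNReal.tsum_le_tsum fun k => ?_
        have hrk : (0:ℝ) < r * 2^k := by positivity
        have hb : (0:ℝ) < r * 2^(k+1) := by positivity
        calc ∫⁻ u in Set.Ico (r * 2^k) (r * 2^(k+1)), ENNReal.ofReal (u ^ σ) ∂ν
            ≤ ∫⁻ _ in Set.Ico (r * 2^k) (r * 2^(k+1)), ENNReal.ofReal ((r * 2^(k+1)) ^ σ) ∂ν := by
              refine setLIntegral_mono measurable_const fun u hu => ?_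
              refine ENNReal.ofReal_le_ofReal ?_
              exact Real.rpow_le_rpow (le_trans hrk.le hu.1) hu.2.le hσ0.le
          _ = ENNReal.ofReal ((r * 2^(k+1)) ^ σ) * ν (Set.Ico (r * 2^k) (r * 2^(k+1))) :=
              setLIntegral_const _ _
          _ ≤ ENNReal.ofReal ((r * 2^(k+1)) ^ σ) * ENNReal.ofReal (C₁ * (r * 2^k) ^ (-α)) := by
              refine mul_le_mul_right (le_trans (measure_mono Set.Ico_subset_Ici_self) ?_) _
              exact htail _ hrk
          _ = ENNReal.ofReal ((r * 2^(k+1)) ^ σ * (C₁ * (r * 2^k) ^ (-α))) := by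
              rw [← ENNReal.ofReal_mul (by positivity)]
          _ = ENNReal.ofReal ((C₁ * 2^σ * r^(σ-α)) * (2^(σ-α))^k) := by
              congr 1
              have h2k : (0:ℝ) < 2^k := by positivity
              rw [Real.mul_rpow hr.le (by positivity), Real.mul_rpow hr.le (by positivity),
                Real.rpow_sub hr, ← two_pow_rpow k (σ - α), Real.rpow_sub h2k,
                pow_succ, Real.mul_rpow h2k.le (by norm_num), Real.rpow_neg hr.le,
                Real.rpow_neg h2k.le]
              have hra : r ^ α ≠ 0 := ne_of_gt (Real.rpow_pos_of_pos hr _)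
              have h2a : ((2:ℝ)^k) ^ α ≠ 0 := ne_of_gt (Real.rpow_pos_of_pos h2k _)
              field_simp
    _ = ENNReal.ofReal (C₁ * 2^σ * r^(σ-α)) * ∑' k : ℕ, (ENNReal.ofReal (2^(σ-α)))^k := by
        rw [← ENNReal.tsum_mul_left]
        congr 1; funext k
        rw [ENNReal.ofReal_mul (by positivity), ENNReal.ofReal_pow hp0.le]
    _ = ENNReal.ofReal (C₁ * 2^σ * r^(σ-α)) * (1 - ENNReal.ofReal (2^(σ-α)))⁻¹ := by
        rw [ENNReal.tsum_geometric]
    _ = ENNReal.ofReal ((C₁ * 2^σ / (1 - 2^(σ-α))) * r ^ (σ - α)) := by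
        rw [← ENNReal.ofReal_one, ← ENNReal.ofReal_sub _ hp0.le,
          ← ENNReal.ofReal_inv_of_pos (by linarith), ← ENNReal.ofReal_mul (by positivity)]
        congr 1
        field_simp


lemma two_pow_rpow' (k : ℕ) (e : ℝ) : ((2:ℝ)^k : ℝ) ^ e = ((2:ℝ) ^ e) ^ k := by
  rw [← Real.rpow_natCast (2:ℝ) k, ← Real.rpow_natCast ((2:ℝ)^e) k,
    ← Real.rpow_mul (by norm_num), ← Real.rpow_mul (by norm_num), mul_comm]

lemma interior_lintegral_bound (α C₁ : ℝ) (hα0 : 0 < α) (hα2 : α < 2)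
    (hC₁ : 0 < C₁) (ν : Measure ℝ)
    (htail : ∀ r : ℝ, 0 < r → ν (Set.Ici r) ≤ ENNReal.ofReal (C₁ * r ^ (-α)))
    (R : ℝ) (hR : 1 ≤ R) :
    ∫⁻ u in Set.Ioc 1 R, ENNReal.ofReal (u ^ 2) ∂ν
      ≤ ENNReal.ofReal ((16 * C₁ / (2^(2-α) - 1)) * R ^ (2 - α)) := by
  classical
  set q : ℝ := 2^(2-α) with hqdef
  have hq1 : 1 < q := by
    rw [hqdef]
    rw [show (1:ℝ) = (2:ℝ)^(0:ℝ) by simp]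
    exact Real.rpow_lt_rpow_of_exponent_lt (by norm_num) (by linarith)
  -- choose N with R ≤ 2^N ≤ 2R
  have hexN : ∃ n : ℕ, R ≤ (2:ℝ)^n := by
    obtain ⟨n, hn⟩ := pow_unbounded_of_one_lt R (by norm_num : (1:ℝ) < 2)
    exact ⟨n, hn.le⟩
  set N := Nat.find hexN with hNdef
  have hN1 : R ≤ (2:ℝ)^N := Nat.find_spec hexN
  have hN2 : (2:ℝ)^N ≤ 2 * R := by
    rcases Nat.eq_zero_or_pos N with h0 | hpos
    · rw [h0]; simpa using by linarith
    · have hmin := Nat.find_min hexN (m := N - 1) (by omega)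
      push_neg at hmin
      have : (2:ℝ)^N = 2 * (2:ℝ)^(N-1) := by
        rw [← pow_succ']
        congr 1; omega
      rw [this]; nlinarith
  have hmem : ∀ k : ℕ, k ≥ N → ¬ ((2:ℝ)^k < R) := by
    intro k hk h
    have : (2:ℝ)^N ≤ 2^k := by
      apply pow_le_pow_right₀ (by norm_num) hk
    linarith
  -- covering
  have hcover : Set.Ioc (1:ℝ) R ⊆ ⋃ k : ℕ, (Set.Ioc ((2:ℝ)^k) ((2:ℝ)^(k+1)) ∩ Set.Ioc 1 R) := by
    intro u hu
    have hu1 : 1 < u := hu.1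
    have hex : ∃ n : ℕ, u ≤ (2:ℝ)^(n+1) := by
      obtain ⟨n, hn⟩ := pow_unbounded_of_one_lt u (by norm_num : (1:ℝ) < 2)
      exact ⟨n, by calc u ≤ 2^n := hn.le
                      _ ≤ 2^(n+1) := by apply pow_le_pow_right₀ (by norm_num); omega⟩
    set n := Nat.find hex with hndef
    have hspec : u ≤ (2:ℝ)^(n+1) := Nat.find_spec hex
    have hlow : (2:ℝ)^n < u := by
      rcases Nat.eq_zero_or_pos n with h0 | hpos
      · rw [h0]; simpa using hu1
      · have hmin := Nat.find_min hex (m := n - 1) (by omega)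
        push_neg at hmin
        have : n - 1 + 1 = n := by omega
        rwa [this] at hmin
    exact Set.mem_iUnion.2 ⟨n, ⟨hlow, hspec⟩, hu⟩
  calc ∫⁻ u in Set.Ioc 1 R, ENNReal.ofReal (u ^ 2) ∂ν
      ≤ ∫⁻ u in ⋃ k : ℕ, (Set.Ioc ((2:ℝ)^k) ((2:ℝ)^(k+1)) ∩ Set.Ioc 1 R),
          ENNReal.ofReal (u ^ 2) ∂ν := lintegral_mono_set hcover
    _ ≤ ∑' k : ℕ, ∫⁻ u in (Set.Ioc ((2:ℝ)^k) ((2:ℝ)^(k+1)) ∩ Set.Ioc 1 R),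
          ENNReal.ofReal (u ^ 2) ∂ν := lintegral_iUnion_le _ _
    _ ≤ ∑' k : ℕ, (if (2:ℝ)^k < R then ENNReal.ofReal ((4*C₁) * q^k) else 0) := by
        refine ENNReal.tsum_le_tsum fun k => ?_
        by_cases hk : (2:ℝ)^k < R
        · simp only [hk, if_true]
          have h2k : (0:ℝ) < 2^k := by positivity
          calc ∫⁻ u in (Set.Ioc ((2:ℝ)^k) ((2:ℝ)^(k+1)) ∩ Set.Ioc 1 R), ENNReal.ofReal (u ^ 2) ∂ν
              ≤ ∫⁻ _ in (Set.Ioc ((2:ℝ)^k) ((2:ℝ)^(k+1)) ∩ Set.Ioc 1 R),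
                  ENNReal.ofReal (((2:ℝ)^(k+1)) ^ 2) ∂ν := by
                refine setLIntegral_mono measurable_const fun u hu => ?_
                refine ENNReal.ofReal_le_ofReal ?_
                have h1 : 0 ≤ u := le_trans h2k.le hu.1.1.le
                exact pow_le_pow_left₀ h1 hu.1.2 2
            _ = ENNReal.ofReal (((2:ℝ)^(k+1)) ^ 2) *
                  ν (Set.Ioc ((2:ℝ)^k) ((2:ℝ)^(k+1)) ∩ Set.Ioc 1 R) := setLIntegral_const _ _
            _ ≤ ENNReal.ofReal (((2:ℝ)^(k+1)) ^ 2) * ENNReal.ofReal (C₁ * ((2:ℝ)^k) ^ (-α)) := by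
                refine mul_le_mul_right (le_trans (measure_mono ?_) (htail _ h2k)) _
                exact fun u hu => le_of_lt hu.1.1
            _ = ENNReal.ofReal (((2:ℝ)^(k+1)) ^ 2 * (C₁ * ((2:ℝ)^k) ^ (-α))) := by
                rw [← ENNReal.ofReal_mul (by positivity)]
            _ = ENNReal.ofReal ((4*C₁) * q^k) := by
                congr 1
                have e1 : ((2:ℝ)^(k+1))^2 = 4 * ((2:ℝ)^k)^(2:ℝ) := by
                  rw [Real.rpow_two]; ring
                rw [e1, hqdef, ← two_pow_rpow' k (2-α), Real.rpow_sub h2k,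
                  Real.rpow_neg h2k.le]
                have h2a : ((2:ℝ)^k) ^ α ≠ 0 := ne_of_gt (Real.rpow_pos_of_pos h2k _)
                field_simp
        · simp only [hk, if_false]
          have : (Set.Ioc ((2:ℝ)^k) ((2:ℝ)^(k+1)) ∩ Set.Ioc 1 R) = ∅ := by
            ext u
            simp only [Set.mem_inter_iff, Set.mem_Ioc, Set.mem_empty_iff_false, iff_false]
            rintro ⟨⟨h1, _⟩, ⟨_, h2⟩⟩
            push_neg at hk
            linarith
          rw [this]
          simp
    _ = ∑ k ∈ Finset.range N, (if (2:ℝ)^k < R then ENNReal.ofReal ((4*C₁) * q^k) else 0) := by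
        refine tsum_eq_sum fun k hk => ?_
        rw [if_neg (hmem k (le_of_not_gt (fun h => hk (Finset.mem_range.mpr h))))]
    _ ≤ ∑ k ∈ Finset.range N, ENNReal.ofReal ((4*C₁) * q^k) := by
        refine Finset.sum_le_sum fun k _ => ?_
        split_ifs
        · exact le_refl _
        · exact zero_le
    _ = ENNReal.ofReal (∑ k ∈ Finset.range N, (4*C₁) * q^k) := by
        rw [ENNReal.ofReal_sum_of_nonneg fun k _ => by positivity]
    _ ≤ ENNReal.ofReal ((16 * C₁ / (q - 1)) * R ^ (2 - α)) := by
        refine ENNReal.ofReal_le_ofReal ?_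
        rw [← Finset.mul_sum, geom_sum_eq (ne_of_gt hq1)]
        have hqN : q^N ≤ 4 * R^(2-α) := by
          have : q^N = ((2:ℝ)^N)^(2-α) := (two_pow_rpow' N (2-α)).symm
          rw [this]
          calc ((2:ℝ)^N)^(2-α) ≤ (2*R)^(2-α) := by
                apply Real.rpow_le_rpow (by positivity) hN2 (by linarith)
            _ = 2^(2-α) * R^(2-α) := Real.mul_rpow (by norm_num) (by linarith)
            _ ≤ 4 * R^(2-α) := by
                have h4 : (2:ℝ)^(2-α) ≤ 4 := by
                  calc (2:ℝ)^(2-α) ≤ 2^(2:ℝ) :=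
                        Real.rpow_le_rpow_of_exponent_le (by norm_num) (by linarith)
                    _ = 4 := by
                        rw [Real.rpow_two]; norm_num
                have hr : (0:ℝ) ≤ R^(2-α) := Real.rpow_nonneg (by linarith) _
                nlinarith
        have hden : 0 < q - 1 := by linarith
        have e1 : 4*C₁ * ((q^N - 1)/(q-1)) = (4*C₁*(q^N-1))/(q-1) := by ring
        have e2 : 16*C₁/(q-1) * R^(2-α) = (16*C₁*R^(2-α))/(q-1) := by ring
        have hqN1 : (1:ℝ) ≤ q^N := one_le_pow₀ hq1.le
        rw [e1, e2]
        have hRpos : (0:ℝ) ≤ R^(2-α) := Real.rpow_nonneg (by linarith) _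
        refine div_le_div₀ (by positivity) ?_ hden le_rfl
        nlinarith [mul_le_mul_of_nonneg_left hqN (by positivity : (0:ℝ) ≤ 4*C₁)]


lemma G_one_side (σ C₃ M : ℝ) (hσ : 0 < σ) (G : ℝ → ℝ) (hG : ContDiff ℝ 1 G)
    (hM : |G 1| ≤ M) (hd : ∀ t : ℝ, 1 ≤ t → |deriv G t| ≤ C₃ * t^(σ-1)) :
    ∀ z, 1 ≤ z → |G z| ≤ M + C₃/σ * (1+z)^σ := by
  intro z hz
  have hdiff : Differentiable ℝ G := hG.differentiable one_ne_zero
  have hcd : Continuous (deriv G) := hG.continuous_deriv le_rfl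
  have hint : IntervalIntegrable (deriv G) MeasureTheory.volume 1 z :=
    hcd.intervalIntegrable _ _
  have heq : ∫ t in (1:ℝ)..z, deriv G t = G z - G 1 :=
    intervalIntegral.integral_deriv_eq_sub (fun x _ => hdiff.differentiableAt) hint
  have hintg : IntervalIntegrable (fun t => C₃ * t^(σ-1)) MeasureTheory.volume 1 z := by
    apply ContinuousOn.intervalIntegrable
    apply ContinuousOn.mul continuousOn_const
    intro t ht
    rw [Set.uIcc_of_le hz] at ht
    exact (Real.continuousAt_rpow_const t (σ-1) (Or.inl (by linarith [ht.1]))).continuousWithinAt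
  have hb : |G z - G 1| ≤ C₃ * ((z^σ - 1)/σ) := by
    rw [← heq]
    calc |∫ t in (1:ℝ)..z, deriv G t| ≤ ∫ t in (1:ℝ)..z, |deriv G t| :=
          intervalIntegral.abs_integral_le_integral_abs hz
      _ ≤ ∫ t in (1:ℝ)..z, C₃ * t^(σ-1) := by
          apply intervalIntegral.integral_mono_on hz hint.abs hintg
          intro t ht
          exact hd t ht.1
      _ = C₃ * ∫ t in (1:ℝ)..z, t^(σ-1) := intervalIntegral.integral_const_mul _ _
      _ = C₃ * ((z^σ - 1)/σ) := by
          rw [integral_rpow (Or.inl (by linarith))]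
          norm_num
  have hzσ : z^σ ≤ (1+z)^σ := Real.rpow_le_rpow (by linarith) (by linarith) hσ.le
  have hC₃0 : 0 ≤ C₃ := by
    have h1 := hd 1 le_rfl
    simpa using le_trans (abs_nonneg _) h1
  have key : C₃ * ((z^σ - 1)/σ) ≤ C₃/σ * (1+z)^σ := by
    rw [mul_div_assoc', div_mul_eq_mul_div]
    refine div_le_div₀ (by positivity) ?_ hσ le_rfl
    nlinarith
  have habs : |G z| ≤ |G 1| + |G z - G 1| := by
    have := abs_add_le (G 1) (G z - G 1); simpa using this
  linarith

lemma G_global (σ C₃ M : ℝ) (hσ0 : 0 < σ) (hC₃ : 0 < C₃) (G : ℝ → ℝ)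
    (hG : ContDiff ℝ 1 G)
    (hM : ∀ z ∈ Set.Icc (-5:ℝ) 5, |G z| ≤ M)
    (hG' : ∀ y : ℝ, 1 ≤ |y| → |deriv G y| ≤ C₃ * |y|^(σ-1)) :
    ∀ z, |G z| ≤ (M + C₃/σ) * (1+|z|)^σ := by
  intro z
  have hM0 : 0 ≤ M := le_trans (abs_nonneg _) (hM 0 (by norm_num))
  have hz0 : (0:ℝ) ≤ |z| := abs_nonneg z
  have hone : (1:ℝ) ≤ (1+|z|)^σ := by
    have : (1:ℝ)^σ ≤ (1+|z|)^σ := Real.rpow_le_rpow zero_le_one (by linarith) hσ0.le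
    simpa using this
  have hfin : |G z| ≤ M + C₃/σ * (1+|z|)^σ → |G z| ≤ (M + C₃/σ) * (1+|z|)^σ := by
    intro h
    have := mul_le_mul_of_nonneg_left hone hM0
    nlinarith
  apply hfin
  rcases le_or_gt (|z|) 1 with hz | hz
  · have hab := abs_le.mp hz
    have h1 : |G z| ≤ M := hM z ⟨by linarith, by linarith⟩
    have h2 : (0:ℝ) ≤ C₃/σ * (1+|z|)^σ := by positivity
    linarith
  · rcases le_or_gt 0 z with hzz | hzz
    · have hz1 : 1 ≤ z := by rw [abs_of_nonneg hzz] at hz; linarith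
      have hd : ∀ t : ℝ, 1 ≤ t → |deriv G t| ≤ C₃ * t^(σ-1) := by
        intro t ht
        have := hG' t (by rw [abs_of_nonneg (by linarith)]; exact ht)
        rwa [abs_of_nonneg (by linarith : (0:ℝ) ≤ t)] at this
      have := G_one_side σ C₃ M hσ0 G hG (hM 1 (by norm_num)) hd z hz1
      rwa [abs_of_nonneg hzz]
    · have hz1 : 1 ≤ -z := by rw [abs_of_neg hzz] at hz; linarith
      set H := fun x : ℝ => G (-x) with hHdef
      have hH : ContDiff ℝ 1 H := hG.comp contDiff_neg
      have hH1 : |H 1| ≤ M := by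
        show |G (-1)| ≤ M
        exact hM (-1) (by norm_num)
      have hd : ∀ t : ℝ, 1 ≤ t → |deriv H t| ≤ C₃ * t^(σ-1) := by
        intro t ht
        have hdr : deriv H t = -deriv G (-t) := deriv_comp_neg G t
        rw [hdr, abs_neg]
        have := hG' (-t) (by rw [abs_neg, abs_of_nonneg (by linarith)]; exact ht)
        rwa [abs_neg, abs_of_nonneg (by linarith : (0:ℝ) ≤ t)] at this
      have hres := G_one_side σ C₃ M hσ0 H hH hH1 hd (-z) hz1
      have he : H (-z) = G z := by show G (-(-z)) = G z; rw [neg_neg]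
      rw [he] at hres
      rwa [abs_of_neg hzz]

lemma second_diff_le (G : ℝ → ℝ) (hG : ContDiff ℝ 2 G) (y u S : ℝ) (hu : 0 ≤ u)
    (hS : ∀ s ∈ Set.Icc (y-u) (y+u), |deriv (deriv G) s| ≤ S) :
    |G (y+u) + G (y-u) - 2*G y| ≤ 2*S*u^2 := by
  have hS0 : 0 ≤ S := le_trans (abs_nonneg _) (hS y ⟨by linarith, by linarith⟩)
  have hdG : Differentiable ℝ G := hG.differentiable (by norm_num)
  have hcd1 : ContDiff ℝ 1 (deriv G) := by
    have h2 : ContDiff ℝ ((1:ℕ)+1 : ℕ) G := by exact_mod_cast hG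
    exact (contDiff_succ_iff_deriv.mp h2).2.2
  have hdG' : Differentiable ℝ (deriv G) := hcd1.differentiable one_ne_zero
  have inner : ∀ t ∈ Set.Icc (0:ℝ) u,
      ‖deriv G (y+t) - deriv G (y-t)‖ ≤ 2*S*u := by
    intro t ht
    have hmem1 : y - t ∈ Set.Icc (y-u) (y+u) := ⟨by linarith [ht.2], by linarith [ht.1]⟩
    have hmem2 : y + t ∈ Set.Icc (y-u) (y+u) := ⟨by linarith [ht.1], by linarith [ht.2]⟩
    have := Convex.norm_image_sub_le_of_norm_hasDerivWithin_le
      (f := deriv G) (f' := deriv (deriv G)) (s := Set.Icc (y-u) (y+u))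
      (fun x _ => (hdG' x).hasDerivAt.hasDerivWithinAt)
      (fun x hx => by simpa [Real.norm_eq_abs] using hS x hx)
      (convex_Icc _ _) hmem1 hmem2
    have he : ‖(y+t) - (y-t)‖ = 2*t := by
      rw [show (y+t) - (y-t) = 2*t by ring, Real.norm_eq_abs,
        abs_of_nonneg (by linarith [ht.1])]
    rw [he] at this
    calc ‖deriv G (y+t) - deriv G (y-t)‖ ≤ S * (2*t) := this
      _ ≤ 2*S*u := by nlinarith [ht.1, ht.2]
  have hH : ∀ t : ℝ, HasDerivAt (fun t => G (y+t) + G (y-t))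
      (deriv G (y+t) - deriv G (y-t)) t := by
    intro t
    have h1 : HasDerivAt (fun t : ℝ => G (y+t)) (deriv G (y+t) * 1) t :=
      (hdG (y+t)).hasDerivAt.comp t ((hasDerivAt_id t).const_add y)
    have h2 : HasDerivAt (fun t : ℝ => G (y-t)) (deriv G (y-t) * (-1)) t :=
      (hdG (y-t)).hasDerivAt.comp t ((hasDerivAt_id t).const_sub y)
    have := h1.add h2
    simpa [mul_comm, sub_eq_add_neg, Pi.add_def] using this
  have final := Convex.norm_image_sub_le_of_norm_hasDerivWithin_le
    (f := fun t => G (y+t) + G (y-t))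
    (f' := fun t => deriv G (y+t) - deriv G (y-t)) (s := Set.Icc (0:ℝ) u)
    (fun x _ => (hH x).hasDerivWithinAt)
    (fun x hx => inner x hx)
    (convex_Icc _ _) (Set.left_mem_Icc.mpr hu) (Set.right_mem_Icc.mpr hu)
  simp only [add_zero, sub_zero] at final
  have : ‖G (y+u) + G (y-u) - (G y + G y)‖ ≤ 2*S*u * ‖u‖ := final
  rw [Real.norm_eq_abs, Real.norm_eq_abs, abs_of_nonneg hu] at this
  calc |G (y+u) + G (y-u) - 2*G y| = |G (y+u) + G (y-u) - (G y + G y)| := by ring_nf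
    _ ≤ 2*S*u*u := this
    _ = 2*S*u^2 := by ring


set_option maxHeartbeats 2000000 in
/-- Lemma A.1 (case `α < 2`): for `G ∈ C²` with `|G'(y)| ≤ C₃|y|^(σ-1)` and
`|G''(y)| ≤ C₃|y|^(σ-2)` for `|y| ≥ 1`, `0 < σ < α < 2`, the symmetrized second
difference `K(y) = ∫₀^∞ (G(y+u)+G(y-u)-2G(y)) dν(u)` satisfies
`|K(y)| ≤ C(1+|y|)^(σ-α)`, uniformly over Lévy-type measures `ν` on `(0,∞)`
with `ν([r,∞)) ≤ C₁ r^(-α)` and `∫(u²∧1)dν ≤ C₂`. -/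
theorem second_difference_bound
    (α σ C₁ C₂ C₃ : ℝ) (hα : α ∈ Set.Ioo (0:ℝ) 2) (hσ : σ ∈ Set.Ioo 0 α)
    (hC₁ : 0 < C₁) (hC₂ : 0 < C₂) (hC₃ : 0 < C₃)
    (G : ℝ → ℝ) (hG : ContDiff ℝ 2 G)
    (hG' : ∀ y : ℝ, 1 ≤ |y| → |deriv G y| ≤ C₃ * |y| ^ (σ - 1))
    (hG'' : ∀ y : ℝ, 1 ≤ |y| → |deriv (deriv G) y| ≤ C₃ * |y| ^ (σ - 2)) :
    ∃ C : ℝ, 0 < C ∧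
      ∀ ν : Measure ℝ, ν (Set.Ioi (0:ℝ))ᶜ = 0 →
        (∀ r : ℝ, 0 < r → ν (Set.Ici r) ≤ ENNReal.ofReal (C₁ * r ^ (-α))) →
        (∫⁻ u, ENNReal.ofReal (min (u ^ 2) 1) ∂ν) ≤ ENNReal.ofReal C₂ →
        ∀ y : ℝ,
          Integrable (fun u => G (y + u) + G (y - u) - 2 * G y) ν ∧
          |∫ u, (G (y + u) + G (y - u) - 2 * G y) ∂ν|
            ≤ C * (1 + |y|) ^ (σ - α) := by
  obtain ⟨hα0, hα2⟩ := hα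
  obtain ⟨hσ0, hσα⟩ := hσ
  have hσ2 : σ < 2 := lt_trans hσα hα2
  -- regularity facts
  have hG1 : ContDiff ℝ 1 G := hG.of_le (by norm_num)
  have hcontG : Continuous G := hG.continuous
  have hcd1 : ContDiff ℝ 1 (deriv G) := by
    have h2 : ContDiff ℝ ((1:ℕ)+1 : ℕ) G := by exact_mod_cast hG
    exact (contDiff_succ_iff_deriv.mp h2).2.2
  have hcontG'' : Continuous (deriv (deriv G)) := hcd1.continuous_deriv le_rfl
  -- compact bounds on [-5,5]
  obtain ⟨M₁, hM₁⟩ := (isCompact_Icc (a := (-5:ℝ)) (b := 5)).exists_bound_of_continuousOn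
    hcontG.continuousOn
  obtain ⟨M₂, hM₂⟩ := (isCompact_Icc (a := (-5:ℝ)) (b := 5)).exists_bound_of_continuousOn
    hcontG''.continuousOn
  set M : ℝ := max (max M₁ M₂) 0 with hMdef
  have hMnn : 0 ≤ M := le_max_right _ _
  have hMG : ∀ z ∈ Set.Icc (-5:ℝ) 5, |G z| ≤ M := fun z hz =>
    le_trans (by simpa [Real.norm_eq_abs] using hM₁ z hz)
      (le_trans (le_max_left _ _) (le_max_left _ _))
  have hMG'' : ∀ z ∈ Set.Icc (-5:ℝ) 5, |deriv (deriv G) z| ≤ M := fun z hz =>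
    le_trans (by simpa [Real.norm_eq_abs] using hM₂ z hz)
      (le_trans (le_max_right _ _) (le_max_left _ _))
  -- constants
  set K0 : ℝ := M + C₃/σ with hK0def
  have hK0pos : 0 < K0 := by
    have h : 0 < C₃/σ := by positivity
    simp only [hK0def]
    linarith
  have hGb : ∀ z, |G z| ≤ K0 * (1+|z|)^σ := G_global σ C₃ M hσ0 hC₃ G hG1 hMG hG'
  have hp0 : (0:ℝ) < 2^(σ-α) := Real.rpow_pos_of_pos (by norm_num) _
  have hp1 : (2:ℝ)^(σ-α) < 1 :=
    Real.rpow_lt_one_of_one_lt_of_neg (by norm_num) (by linarith)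
  have hq1 : (1:ℝ) < 2^(2-α) := by
    have : (1:ℝ)^(2-α) < 2^(2-α) :=
      Real.rpow_lt_rpow zero_le_one (by norm_num) (by linarith)
    simpa using this
  set Ctail : ℝ := C₁ * 2^σ / (1 - 2^(σ-α)) with hCtaildef
  have hCtailpos : 0 < Ctail := by
    apply div_pos (by positivity); linarith
  set Cint : ℝ := 16*C₁/(2^(2-α) - 1) with hCintdef
  have hCintpos : 0 < Cint := by
    apply div_pos (by positivity); linarith
  set A' : ℝ := 32*(M+C₃) with hA'def
  have hA'pos : 0 < A' := by simp only [hA'def]; linarith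
  set Cfin : ℝ := A'*C₂ + A'*Cint + 144*K0*Ctail with hCfindef
  have hCfinpos : 0 < Cfin := by positivity
  refine ⟨Cfin, hCfinpos, ?_⟩
  intro ν hν htail hmom y
  set R : ℝ := 1 + |y| with hRdef
  have hyabs : (0:ℝ) ≤ |y| := abs_nonneg y
  have hR1 : 1 ≤ R := by simp only [hRdef]; linarith
  have hR0 : 0 < R := by linarith
  set D : ℝ → ℝ := fun u => G (y + u) + G (y - u) - 2 * G y with hDdef
  have hDcont : Continuous D := by
    apply Continuous.sub
    · exact (hcontG.comp (continuous_const.add continuous_id)).add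
        (hcontG.comp (continuous_const.sub continuous_id))
    · exact continuous_const
  have h416 : (1:ℝ)/16 ≤ (4:ℝ)^(σ-2) := by
    have h1 : (4:ℝ)^(-2:ℝ) ≤ 4^(σ-2) :=
      Real.rpow_le_rpow_of_exponent_le (by norm_num) (by linarith)
    have h2 : (4:ℝ)^(-2:ℝ) = 1/16 := by
      rw [show ((-2:ℝ)) = -(2:ℝ) by norm_num, Real.rpow_neg (by norm_num), Real.rpow_two]
      norm_num
    rw [h2] at h1
    linarith
  -- small-u pointwise bound
  have hsmall : ∀ u ∈ Set.Ioc (0:ℝ) (R/2), |D u| ≤ A' * R^(σ-2) * u^2 := by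
    rintro u ⟨hu0, huR⟩
    have hstep : ∀ s ∈ Set.Icc (y-u) (y+u),
        |deriv (deriv G) s| ≤ 16*(M+C₃)*R^(σ-2) := by
      intro s hs
      have hsy : |s - y| ≤ u := abs_le.mpr ⟨by linarith [hs.1], by linarith [hs.2]⟩
      have hsub : |s| ≤ |y| + u := by
        calc |s| = |y + (s - y)| := by congr 1; ring
          _ ≤ |y| + |s - y| := abs_add_le _ _
          _ ≤ |y| + u := by linarith
      have hsub2 : |y| - u ≤ |s| := by
        have h : |y| ≤ |s| + |y - s| := by
          calc |y| = |s + (y - s)| := by congr 1; ring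
            _ ≤ |s| + |y - s| := abs_add_le _ _
        have h2 : |y - s| = |s - y| := abs_sub_comm y s
        linarith
      rcases le_or_gt (|y|) 3 with h3 | h3
      · have hu2 : u ≤ 2 := by
          have : R ≤ 4 := by simp only [hRdef]; linarith
          linarith
        have hs5 : |s| ≤ 5 := by linarith
        have hGs : |deriv (deriv G) s| ≤ M := by
          have hab := abs_le.mp hs5
          exact hMG'' s ⟨by linarith, by linarith⟩
        have hR4 : R ≤ 4 := by simp only [hRdef]; linarith
        have h4 : (4:ℝ)^(σ-2) ≤ R^(σ-2) :=
          Real.rpow_le_rpow_of_nonpos hR0 hR4 (by linarith)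
        have hmul := mul_le_mul_of_nonneg_left (le_trans h416 h4)
          (by linarith : (0:ℝ) ≤ 16*(M+C₃))
        have : 16*(M+C₃)*(1/16) = M + C₃ := by ring
        linarith
      · have hsabs : R/4 ≤ |s| := by
          have h1 : u ≤ R/2 := huR
          have h2 : (|y|+1)/4 ≤ (|y|-1)/2 := by linarith
          have : |y| - R/2 = (|y|-1)/2 := by simp only [hRdef]; ring
          simp only [hRdef] at *
          linarith
        have hs1 : 1 ≤ |s| := by
          have : (|y|+1)/4 ≥ 1 := by linarith
          simp only [hRdef] at hsabs
          linarith
        have hbound := hG'' s hs1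
        have hmono : |s|^(σ-2) ≤ (R/4)^(σ-2) :=
          Real.rpow_le_rpow_of_nonpos (by positivity) hsabs (by linarith)
        have hdiv : (R/4)^(σ-2) = R^(σ-2) / 4^(σ-2) :=
          Real.div_rpow hR0.le (by norm_num) _
        have h4pos : (0:ℝ) < 4^(σ-2) := Real.rpow_pos_of_pos (by norm_num) _
        have hRpos : (0:ℝ) < R^(σ-2) := Real.rpow_pos_of_pos hR0 _
        have h16 : R^(σ-2) / 4^(σ-2) ≤ 16 * R^(σ-2) := by
          rw [div_le_iff₀ h4pos]
          have hh := mul_le_mul_of_nonneg_left h416 (by positivity : (0:ℝ) ≤ 16*R^(σ-2))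
          calc R^(σ-2) = 16*R^(σ-2)*(1/16) := by ring
            _ ≤ 16*R^(σ-2)*4^(σ-2) := hh
        have hfin : C₃ * |s|^(σ-2) ≤ 16*C₃*R^(σ-2) := by
          have h1 : |s|^(σ-2) ≤ 16 * R^(σ-2) := le_trans (le_trans hmono (le_of_eq hdiv)) h16
          calc C₃ * |s|^(σ-2) ≤ C₃ * (16*R^(σ-2)) := mul_le_mul_of_nonneg_left h1 hC₃.le
            _ = 16*C₃*R^(σ-2) := by ring
        have hlast : 16*C₃*R^(σ-2) ≤ 16*(M+C₃)*R^(σ-2) := by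
          have := mul_le_mul_of_nonneg_right (by linarith : 16*C₃ ≤ 16*(M+C₃)) hRpos.le
          linarith
        linarith
    have hres := second_diff_le G hG y u (16*(M+C₃)*R^(σ-2)) hu0.le hstep
    calc |D u| = |G (y+u) + G (y-u) - 2*G y| := rfl
      _ ≤ 2*(16*(M+C₃)*R^(σ-2))*u^2 := hres
      _ = A' * R^(σ-2) * u^2 := by simp only [hA'def]; ring
  -- large-u pointwise bound
  have hlarge : ∀ u, R/2 ≤ u → |D u| ≤ 36*K0 * u^σ := by
    intro u hu
    have hu0 : 0 < u := by linarith
    have hR2u : R ≤ 2*u := by linarith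
    have h9 : (3:ℝ)^σ ≤ 9 := by
      have h1 : (3:ℝ)^σ ≤ 3^(2:ℝ) :=
        Real.rpow_le_rpow_of_exponent_le (by norm_num) (by linarith)
      have h2 : (3:ℝ)^(2:ℝ) = 9 := by
        rw [Real.rpow_two]; norm_num
      linarith
    have huσ : (0:ℝ) ≤ u^σ := (Real.rpow_pos_of_pos hu0 _).le
    have hkey : ∀ z : ℝ, 1 + |z| ≤ 3*u → |G z| ≤ 9*K0*u^σ := by
      intro z hz
      have h1 : (1+|z|)^σ ≤ (3*u)^σ :=
        Real.rpow_le_rpow (by positivity) hz hσ0.le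
      have h2 : (3*u)^σ = 3^σ * u^σ := Real.mul_rpow (by norm_num) hu0.le
      have h3 : 3^σ * u^σ ≤ 9 * u^σ := mul_le_mul_of_nonneg_right h9 huσ
      have h4 := hGb z
      have h5 : K0*(1+|z|)^σ ≤ K0*(9*u^σ) := mul_le_mul_of_nonneg_left (by linarith) hK0pos.le
      linarith
    have hz1 : 1 + |y+u| ≤ 3*u := by
      have := abs_add_le y u
      rw [abs_of_pos hu0] at this
      simp only [hRdef] at hR2u
      linarith
    have hz2 : 1 + |y-u| ≤ 3*u := by
      have := abs_sub y u
      rw [abs_of_pos hu0] at this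
      simp only [hRdef] at hR2u
      linarith
    have hz3 : 1 + |y| ≤ 3*u := by simp only [hRdef] at hR2u; linarith
    have b1 := hkey (y+u) hz1
    have b2 := hkey (y-u) hz2
    have b3 := hkey y hz3
    have habs : |D u| ≤ |G (y+u)| + |G (y-u)| + 2*|G y| := by
      have h1 := abs_sub (G (y+u) + G (y-u)) (2*G y)
      have h2 := abs_add_le (G (y+u)) (G (y-u))
      have h3 : |2*G y| = 2*|G y| := by rw [abs_mul]; norm_num
      calc |D u| = |(G (y+u) + G (y-u)) - 2*G y| := rfl
        _ ≤ |G (y+u) + G (y-u)| + |2*G y| := h1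
        _ ≤ |G (y+u)| + |G (y-u)| + 2*|G y| := by linarith
    calc |D u| ≤ |G (y+u)| + |G (y-u)| + 2*|G y| := habs
      _ ≤ 36*K0*u^σ := by linarith
  -- measurability helpers
  have hmeas2 : Measurable fun u : ℝ => ENNReal.ofReal (u^2) := by fun_prop
  have hmeasσ : Measurable fun u : ℝ => ENNReal.ofReal (u^σ) := by fun_prop
  -- master lintegral bound
  have key : ∫⁻ u, ENNReal.ofReal ‖D u‖ ∂ν ≤ ENNReal.ofReal (Cfin * R^(σ-α)) := by
    have h0 : ∫⁻ u in (Set.Ioi (0:ℝ))ᶜ, ENNReal.ofReal ‖D u‖ ∂ν = 0 := by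
      rw [show ν.restrict (Set.Ioi (0:ℝ))ᶜ = 0 from Measure.restrict_eq_zero.mpr hν,
        lintegral_zero_measure]
    have hsplit : ∫⁻ u, ENNReal.ofReal ‖D u‖ ∂ν
        = ∫⁻ u in Set.Ioi (0:ℝ), ENNReal.ofReal ‖D u‖ ∂ν := by
      rw [← lintegral_add_compl (fun u => ENNReal.ofReal ‖D u‖) measurableSet_Ioi (μ := ν),
        h0, add_zero]
    -- small part
    have hS : ∫⁻ u in Set.Ioc (0:ℝ) (R/2), ENNReal.ofReal ‖D u‖ ∂ν
        ≤ ENNReal.ofReal ((A'*C₂ + A'*Cint) * R^(σ-α)) := by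
      have hARnn : (0:ℝ) ≤ A' * R^(σ-2) := by positivity
      calc ∫⁻ u in Set.Ioc (0:ℝ) (R/2), ENNReal.ofReal ‖D u‖ ∂ν
          ≤ ∫⁻ u in Set.Ioc (0:ℝ) (R/2),
              ENNReal.ofReal (A' * R^(σ-2)) * ENNReal.ofReal (u^2) ∂ν := by
            refine setLIntegral_mono (measurable_const.mul hmeas2) fun u hu => ?_
            rw [← ENNReal.ofReal_mul hARnn]
            refine ENNReal.ofReal_le_ofReal ?_
            rw [Real.norm_eq_abs]
            exact hsmall u hu
        _ = ENNReal.ofReal (A' * R^(σ-2)) * ∫⁻ u in Set.Ioc (0:ℝ) (R/2),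
              ENNReal.ofReal (u^2) ∂ν := lintegral_const_mul _ hmeas2
        _ ≤ ENNReal.ofReal (A' * R^(σ-2)) *
              (ENNReal.ofReal C₂ + ENNReal.ofReal (Cint * R^(2-α))) := by
            refine mul_le_mul_right ?_ _
            have hsub : Set.Ioc (0:ℝ) (R/2) ⊆ Set.Ioc (0:ℝ) 1 ∪ Set.Ioc 1 R := by
              rintro u ⟨h1, h2⟩
              rcases le_or_gt u 1 with h | h
              · exact Or.inl ⟨h1, h⟩
              · exact Or.inr ⟨h, by linarith⟩
            have hsmall1 : ∫⁻ u in Set.Ioc (0:ℝ) 1, ENNReal.ofReal (u^2) ∂ν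
                ≤ ENNReal.ofReal C₂ := by
              calc ∫⁻ u in Set.Ioc (0:ℝ) 1, ENNReal.ofReal (u^2) ∂ν
                  = ∫⁻ u in Set.Ioc (0:ℝ) 1, ENNReal.ofReal (min (u^2) 1) ∂ν := by
                    refine setLIntegral_congr_fun measurableSet_Ioc
                      (fun u hu => ?_)
                    rw [min_eq_left]
                    nlinarith [hu.1, hu.2]
                _ ≤ ∫⁻ u, ENNReal.ofReal (min (u^2) 1) ∂ν := setLIntegral_le_lintegral _ _
                _ ≤ ENNReal.ofReal C₂ := hmom
            calc ∫⁻ u in Set.Ioc (0:ℝ) (R/2), ENNReal.ofReal (u^2) ∂ν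
                ≤ ∫⁻ u in Set.Ioc (0:ℝ) 1 ∪ Set.Ioc 1 R, ENNReal.ofReal (u^2) ∂ν :=
                  lintegral_mono_set hsub
              _ ≤ (∫⁻ u in Set.Ioc (0:ℝ) 1, ENNReal.ofReal (u^2) ∂ν)
                    + ∫⁻ u in Set.Ioc (1:ℝ) R, ENNReal.ofReal (u^2) ∂ν :=
                  lintegral_union_le _ _ _
              _ ≤ ENNReal.ofReal C₂ + ENNReal.ofReal (Cint * R^(2-α)) := by
                  refine add_le_add hsmall1 ?_
                  exact interior_lintegral_bound α C₁ hα0 hα2 hC₁ ν htail R hR1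
        _ = ENNReal.ofReal (A' * R^(σ-2) * (C₂ + Cint * R^(2-α))) := by
            rw [← ENNReal.ofReal_add hC₂.le (by positivity),
              ← ENNReal.ofReal_mul hARnn]
        _ ≤ ENNReal.ofReal ((A'*C₂ + A'*Cint) * R^(σ-α)) := by
            refine ENNReal.ofReal_le_ofReal ?_
            have e1 : R^(σ-2) ≤ R^(σ-α) := Real.rpow_le_rpow_of_exponent_le hR1 (by linarith)
            have e2 : R^(σ-2) * R^(2-α) = R^(σ-α) := by
              rw [← Real.rpow_add hR0]; ring_nf
            have t1 : A'*C₂*R^(σ-2) ≤ A'*C₂*R^(σ-α) :=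
              mul_le_mul_of_nonneg_left e1 (by positivity)
            calc A'*R^(σ-2)*(C₂+Cint*R^(2-α))
                = A'*C₂*R^(σ-2) + A'*Cint*(R^(σ-2)*R^(2-α)) := by ring
              _ = A'*C₂*R^(σ-2) + A'*Cint*R^(σ-α) := by rw [e2]
              _ ≤ A'*C₂*R^(σ-α) + A'*Cint*R^(σ-α) := by linarith
              _ = (A'*C₂+A'*Cint)*R^(σ-α) := by ring
    -- large part
    have hL : ∫⁻ u in Set.Ioi (R/2), ENNReal.ofReal ‖D u‖ ∂ν
        ≤ ENNReal.ofReal ((144*K0*Ctail) * R^(σ-α)) := by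
      calc ∫⁻ u in Set.Ioi (R/2), ENNReal.ofReal ‖D u‖ ∂ν
          ≤ ∫⁻ u in Set.Ioi (R/2),
              ENNReal.ofReal (36*K0) * ENNReal.ofReal (u^σ) ∂ν := by
            refine setLIntegral_mono (measurable_const.mul hmeasσ) fun u hu => ?_
            rw [← ENNReal.ofReal_mul (by positivity)]
            refine ENNReal.ofReal_le_ofReal ?_
            rw [Real.norm_eq_abs]
            exact hlarge u (le_of_lt hu)
        _ ≤ ∫⁻ u in Set.Ici (R/2),
              ENNReal.ofReal (36*K0) * ENNReal.ofReal (u^σ) ∂ν :=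
            lintegral_mono_set Set.Ioi_subset_Ici_self
        _ = ENNReal.ofReal (36*K0) * ∫⁻ u in Set.Ici (R/2), ENNReal.ofReal (u^σ) ∂ν :=
            lintegral_const_mul _ hmeasσ
        _ ≤ ENNReal.ofReal (36*K0) * ENNReal.ofReal (Ctail * (R/2)^(σ-α)) := by
            refine mul_le_mul_right ?_ _
            exact tail_lintegral_bound α σ C₁ hα0 hσ0 hσα hC₁ ν htail (R/2) (by linarith)
        _ ≤ ENNReal.ofReal ((144*K0*Ctail) * R^(σ-α)) := by
            rw [← ENNReal.ofReal_mul (by positivity)]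
            refine ENNReal.ofReal_le_ofReal ?_
            have he : (R/2)^(σ-α) = R^(σ-α) * 2^(α-σ) := by
              rw [Real.div_rpow hR0.le (by norm_num), div_eq_mul_inv,
                ← Real.rpow_neg (by norm_num : (0:ℝ) ≤ 2), show -(σ-α) = α-σ by ring]
            have h4 : (2:ℝ)^(α-σ) ≤ 4 := by
              have h1 : (2:ℝ)^(α-σ) ≤ 2^(2:ℝ) :=
                Real.rpow_le_rpow_of_exponent_le (by norm_num) (by linarith)
              have h2 : (2:ℝ)^(2:ℝ) = 4 := by rw [Real.rpow_two]; norm_num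
              linarith
            rw [he]
            calc 36*K0*(Ctail*(R^(σ-α)*2^(α-σ)))
                = 36*K0*Ctail*R^(σ-α)*2^(α-σ) := by ring
              _ ≤ 36*K0*Ctail*R^(σ-α)*4 :=
                  mul_le_mul_of_nonneg_left h4 (by positivity)
              _ = 144*K0*Ctail*R^(σ-α) := by ring
    calc ∫⁻ u, ENNReal.ofReal ‖D u‖ ∂ν
        = ∫⁻ u in Set.Ioi (0:ℝ), ENNReal.ofReal ‖D u‖ ∂ν := hsplit
      _ = ∫⁻ u in Set.Ioc (0:ℝ) (R/2) ∪ Set.Ioi (R/2), ENNReal.ofReal ‖D u‖ ∂ν := by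
          rw [Set.Ioc_union_Ioi_eq_Ioi (by linarith : (0:ℝ) ≤ R/2)]
      _ ≤ (∫⁻ u in Set.Ioc (0:ℝ) (R/2), ENNReal.ofReal ‖D u‖ ∂ν)
            + ∫⁻ u in Set.Ioi (R/2), ENNReal.ofReal ‖D u‖ ∂ν := lintegral_union_le _ _ _
      _ ≤ ENNReal.ofReal ((A'*C₂ + A'*Cint) * R^(σ-α))
            + ENNReal.ofReal ((144*K0*Ctail) * R^(σ-α)) := add_le_add hS hL
      _ = ENNReal.ofReal (Cfin * R^(σ-α)) := by
          rw [← ENNReal.ofReal_add (by positivity) (by positivity)]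
          congr 1
          simp only [hCfindef]
          ring
  constructor
  · refine ⟨hDcont.aestronglyMeasurable, ?_⟩
    rw [hasFiniteIntegral_iff_norm]
    exact lt_of_le_of_lt key ENNReal.ofReal_lt_top
  · have h1 : |∫ u, D u ∂ν| ≤ (∫⁻ u, ENNReal.ofReal ‖D u‖ ∂ν).toReal := by
      rw [← Real.norm_eq_abs]
      exact norm_integral_le_lintegral_norm D
    have h2 := ENNReal.toReal_mono ENNReal.ofReal_ne_top key
    rw [ENNReal.toReal_ofReal (by positivity)] at h2
    exact le_trans h1 h2
end
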